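/- arXiv:1808.09230 — 12 statements merged into one kernel-verified Lean document; each statement's English description precedes it below -/
import Mathlib

section
/- Let k be a positive integer and let A be a syndetic subset of the natural numbers. Then there exist x, r ∈ ℕ and a prime p such that r ≡ 1 (mod p), x ∈ A, and x·p^k·r ∈ A; i.e., A contains a 2-term geometric progression with common ratio p^k·r. -/
/-- `A` is `l`-syndetic: it meets every block of `l` consecutive positive integers. -/
def SyndeticWith (A : Set ℕ) (l : ℕ) : Prop :=
  ∀ n : ℕ, 0 < n → ∃ m ∈ A, n ≤ m ∧ m < n + l

/-- `A` is syndetic if it is `l`-syndetic for some positive integer `l`. -/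
def Syndetic (A : Set ℕ) : Prop :=
  ∃ l : ℕ, 0 < l ∧ SyndeticWith A l

private lemma win_pair (A : Set ℕ) (k : ℕ) {z p y : ℕ} (hz : z ∈ A) (hy : y ∈ A)
    (hz0 : 0 < z) (hp : p.Prime)
    (hmod : y ≡ z * p ^ k [MOD z * p ^ (k + 1)]) :
    ∃ x r q : ℕ, q.Prime ∧ 0 < r ∧ r ≡ 1 [MOD q] ∧ x ∈ A ∧ x * q ^ k * r ∈ A := by
  have hppow : p ^ k < p ^ (k + 1) := Nat.pow_lt_pow_succ hp.one_lt
  have hlt : z * p ^ k < z * p ^ (k + 1) := by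
    exact mul_lt_mul_of_pos_left hppow hz0
  have hmod' : y % (z * p ^ (k + 1)) = z * p ^ k := by
    have h := hmod
    unfold Nat.ModEq at h
    rwa [Nat.mod_eq_of_lt hlt] at h
  set N := z * p ^ (k + 1) with hN
  refine ⟨z, p * (y / N) + 1, p, hp, Nat.succ_pos _, ?_, hz, ?_⟩
  · show (p * (y / N) + 1) % p = 1 % p
    simp [Nat.mul_add_mod]
  · have hdm := Nat.div_add_mod y N
    have heq : z * p ^ k * (p * (y / N) + 1) = y := by
      have h1 : z * p ^ k * (p * (y / N) + 1)
          = z * p ^ (k + 1) * (y / N) + z * p ^ k := by ring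
      rw [h1, ← hN, ← hmod']
      omega
    rw [heq]
    exact hy

private lemma syndetic_aux (A : Set ℕ) (k l : ℕ) (hk : 0 < k) (hl : 0 < l)
    (hA : SyndeticWith A l) :
    ∀ j : ℕ, ∀ F : Finset ℕ, ∀ C M : ℕ,
      F ⊆ Finset.range l → l ≤ F.card + j → 0 < M →
      (l.factorial) ^ 2 ∣ M → C ≡ 1 [MOD (l.factorial) ^ 2] →
      (∀ f ∈ F, ∃ z p, z ∈ A ∧ 0 < z ∧ p.Prime ∧ z * p ^ (k + 1) ∣ M ∧
        C + f ≡ z * p ^ k [MOD z * p ^ (k + 1)]) →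
      (∀ q, q.Prime → q ∣ M → ¬ q ∣ l.factorial → l < q ∧ ∃ f ∈ F, q ∣ (C + f)) →
      ∃ x r p : ℕ, p.Prime ∧ 0 < r ∧ r ≡ 1 [MOD p] ∧ x ∈ A ∧ x * p ^ k * r ∈ A := by
  intro j
  induction j with
  | zero =>
    intro F C M hFsub hcard hM hL2M hC hI2 _hI3
    have hF : F = Finset.range l := by
      apply Finset.eq_of_subset_of_card_le hFsub
      simpa using hcard
    obtain ⟨y, hyA, hny, hylt⟩ := hA (C + M) (by omega)
    obtain ⟨e, hy_eq, hel⟩ : ∃ e, y = C + M + e ∧ e < l := ⟨y - (C + M), by omega, by omega⟩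
    subst hy_eq
    have heF : e ∈ F := by rw [hF]; exact Finset.mem_range.mpr hel
    obtain ⟨z, p, hzA, hz0, hp, hdvd, hcong⟩ := hI2 e heF
    have hy_cong : C + M + e ≡ z * p ^ k [MOD z * p ^ (k + 1)] := by
      have h0 : M ≡ 0 [MOD z * p ^ (k + 1)] := Nat.modEq_zero_iff_dvd.mpr hdvd
      have h1 : C + M + e ≡ C + 0 + e [MOD z * p ^ (k + 1)] :=
        ((Nat.ModEq.refl C).add h0).add_right e
      have h3 : C + 0 + e = C + e := by omega
      rw [h3] at h1
      exact h1.trans hcong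
    exact win_pair A k hzA hyA hz0 hp hy_cong
  | succ j IH =>
    intro F C M hFsub hcard hM hL2M hC hI2 hI3
    obtain ⟨y, hyA, hny, hylt⟩ := hA (C + M) (by omega)
    obtain ⟨e, hy_eq, hel⟩ : ∃ e, y = C + M + e ∧ e < l := ⟨y - (C + M), by omega, by omega⟩
    subst hy_eq
    by_cases heF : e ∈ F
    · obtain ⟨z, p, hzA, hz0, hp, hdvd, hcong⟩ := hI2 e heF
      have hy_cong : C + M + e ≡ z * p ^ k [MOD z * p ^ (k + 1)] := by
        have h0 : M ≡ 0 [MOD z * p ^ (k + 1)] := Nat.modEq_zero_iff_dvd.mpr hdvd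
        have h1 : C + M + e ≡ C + 0 + e [MOD z * p ^ (k + 1)] :=
          ((Nat.ModEq.refl C).add h0).add_right e
        have h3 : C + 0 + e = C + e := by omega
        rw [h3] at h1
        exact h1.trans hcong
      exact win_pair A k hzA hyA hz0 hp hy_cong
    · -- extension step
      set y := C + M + e with hy_def
      have hy_eq : y = C + M + e := rfl
      set L := l.factorial with hLdef
      have hLpos : 0 < L := l.factorial_pos
      have hlL : l ≤ L := Nat.self_le_factorial l
      have hLL2 : L ≤ L ^ 2 := by nlinarith
      have hlL2 : l ≤ L ^ 2 := le_trans hlL hLL2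
      have hL2M' : L ^ 2 ≤ M := Nat.le_of_dvd hM hL2M
      have h1el : 1 + e ≤ l := by omega
      have h1eL : (1 + e) ∣ L := Nat.dvd_factorial (by omega) h1el
      have hLdL2 : L ∣ L ^ 2 := dvd_pow_self L two_ne_zero
      have h1eL2 : (1 + e) ∣ L ^ 2 := h1eL.trans hLdL2
      have h1eM : (1 + e) ∣ M := h1eL2.trans hL2M
      have hyL2 : y ≡ 1 + e [MOD L ^ 2] := by
        have h0 : M ≡ 0 [MOD L ^ 2] := Nat.modEq_zero_iff_dvd.mpr hL2M
        have h1 : C + M + e ≡ 1 + 0 + e [MOD L ^ 2] := (hC.add h0).add_right e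
        have h3 : 1 + 0 + e = 1 + e := by omega
        rw [h3] at h1
        exact h1
      have h1ey : (1 + e) ∣ y := by
        have h4 : y ≡ 1 + e [MOD 1 + e] := hyL2.of_dvd h1eL2
        have h5 : (1 : ℕ) + e ≡ 0 [MOD 1 + e] := Nat.modEq_zero_iff_dvd.mpr dvd_rfl
        exact Nat.modEq_zero_iff_dvd.mp (h4.trans h5)
      set w := y / (1 + e) with hwdef
      have hyw : y = (1 + e) * w := (Nat.mul_div_cancel' h1ey).symm
      have hwy : w ∣ y := ⟨1 + e, by rw [hyw]; ring⟩
      have hy0 : 0 < y := by omega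
      have hw0 : 0 < w := by
        rcases Nat.eq_zero_or_pos w with h | h
        · rw [h, Nat.mul_zero] at hyw; omega
        · exact h
      -- M is coprime to w
      have copMw : Nat.Coprime M w := by
        rw [Nat.coprime_iff_gcd_eq_one]
        by_contra hg
        obtain ⟨q, hq, hqg⟩ := Nat.exists_prime_and_dvd hg
        have hqM : q ∣ M := hqg.trans (Nat.gcd_dvd_left _ _)
        have hqw : q ∣ w := hqg.trans (Nat.gcd_dvd_right _ _)
        by_cases hqL : q ∣ L
        · have h2 : (1 + e) * q ∣ y := by
            rw [hyw]; exact mul_dvd_mul dvd_rfl hqw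
          have h3 : (1 + e) * q ∣ L ^ 2 := by
            rw [sq]; exact mul_dvd_mul h1eL hqL
          have h4 : y ≡ 1 + e [MOD (1 + e) * q] := hyL2.of_dvd h3
          have h5 : (1 + e) * q ∣ (1 + e) := by
            have hy0' : y ≡ 0 [MOD (1 + e) * q] := Nat.modEq_zero_iff_dvd.mpr h2
            exact Nat.modEq_zero_iff_dvd.mp (h4.symm.trans hy0')
          have h6 := Nat.le_of_dvd (by omega) h5
          have := hq.two_le
          nlinarith
        · obtain ⟨hql, f, hfF, hqCf⟩ := hI3 q hq hqM hqL
          have hqy : q ∣ y := hqw.trans hwy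
          have hqCe : q ∣ C + e := by
            have h7 : q ∣ y - M := Nat.dvd_sub hqy hqM
            have h8 : y - M = C + e := by omega
            rwa [h8] at h7
          have hfl : f < l := Finset.mem_range.mp (hFsub hfF)
          have hne : e ≠ f := fun h => heF (h ▸ hfF)
          rcases le_or_gt e f with hef | hef
          · have h9 : q ∣ (C + f) - (C + e) := Nat.dvd_sub hqCf hqCe
            have h10 : (C + f) - (C + e) = f - e := by omega
            rw [h10] at h9
            have := Nat.le_of_dvd (by omega) h9
            omega
          · have h9 : q ∣ (C + e) - (C + f) := Nat.dvd_sub hqCe hqCf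
            have h10 : (C + e) - (C + f) = e - f := by omega
            rw [h10] at h9
            have := Nat.le_of_dvd (by omega) h9
            omega
      obtain ⟨p, hpge, hp⟩ := Nat.exists_infinite_primes (M + 1)
      have hpM : M < p := hpge
      have copMp : Nat.Coprime M p := by
        have hnd : ¬ p ∣ M := fun h => absurd (Nat.le_of_dvd hM h) (by omega)
        exact Nat.coprime_comm.mp ((hp.coprime_iff_not_dvd).mpr hnd)
      set m' := w * p ^ (k + 1) with hm'def
      have hm'0 : 0 < m' := Nat.mul_pos hw0 (pow_pos hp.pos _)
      have copMm' : Nat.Coprime M m' := copMw.mul_right (copMp.pow_right _)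
      obtain ⟨D, hD1, hD2⟩ := Nat.chineseRemainder copMm' (C + e) (y * p ^ k)
      have heMm' : e < M * m' := by
        have : M ≤ M * m' := Nat.le_mul_of_pos_right M hm'0
        omega
      set C' := D + M * m' - e with hC'def
      have hC'e : C' + e = D + M * m' := by omega
      have hMm'0 : M * m' ≡ 0 [MOD M] := Nat.modEq_zero_iff_dvd.mpr ⟨m', rfl⟩
      have hC'D : C' + e ≡ D [MOD M] := by
        rw [hC'e]
        have := (Nat.ModEq.refl D).add hMm'0
        simpa using this
      have hC'CM : C' + e ≡ C + e [MOD M] := hC'D.trans hD1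
      have hC'C : C' ≡ C [MOD M] := Nat.ModEq.add_right_cancel' e hC'CM
      have hC'1 : C' ≡ 1 [MOD L ^ 2] := (hC'C.of_dvd hL2M).trans hC
      -- coprimality of 1+e with m'
      have cop1em' : Nat.Coprime (1 + e) m' := by
        have c1 : Nat.Coprime (1 + e) w := Nat.Coprime.coprime_dvd_left h1eM copMw
        have c2 : Nat.Coprime (1 + e) p := by
          have hnd : ¬ p ∣ (1 + e) := fun h => by
            have := Nat.le_of_dvd (by omega) h
            omega
          exact Nat.coprime_comm.mp ((hp.coprime_iff_not_dvd).mpr hnd)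
        exact c1.mul_right (c2.pow_right _)
      have hsplit : y * p ^ (k + 1) = (1 + e) * m' := by
        rw [hm'def, hyw]; ring
      have hnewdvd : y * p ^ (k + 1) ∣ M * m' := by
        rw [hsplit]
        exact mul_dvd_mul h1eM dvd_rfl
      have hC'Dm' : C' + e ≡ D [MOD m'] := by
        rw [hC'e]
        have h0 : M * m' ≡ 0 [MOD m'] := Nat.modEq_zero_iff_dvd.mpr ⟨M, by ring⟩
        have := (Nat.ModEq.refl D).add h0
        simpa using this
      have hnewcongm' : C' + e ≡ y * p ^ k [MOD m'] := hC'Dm'.trans hD2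
      have hnewcong : C' + e ≡ y * p ^ k [MOD y * p ^ (k + 1)] := by
        rw [hsplit]
        refine (Nat.modEq_and_modEq_iff_modEq_mul cop1em').mp ⟨?_, hnewcongm'⟩
        · have a1 : C' + e ≡ 1 + e [MOD 1 + e] := by
            have := (hC'1.of_dvd h1eL2).add_right e
            simpa using this
          have a2 : (1 : ℕ) + e ≡ 0 [MOD 1 + e] := Nat.modEq_zero_iff_dvd.mpr dvd_rfl
          have a3 : y * p ^ k ≡ 0 [MOD 1 + e] :=
            Nat.modEq_zero_iff_dvd.mpr (h1ey.mul_right _)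
          exact (a1.trans a2).trans a3.symm
      -- recurse
      apply IH (insert e F) C' (M * m')
      · rw [Finset.insert_subset_iff]
        exact ⟨Finset.mem_range.mpr hel, hFsub⟩
      · rw [Finset.card_insert_of_notMem heF]; omega
      · exact Nat.mul_pos hM hm'0
      · exact hL2M.mul_right m'
      · exact hC'1
      · intro f hf
        rcases Finset.mem_insert.mp hf with rfl | hfF
        · exact ⟨y, p, hyA, hy0, hp, hnewdvd, hnewcong⟩
        · obtain ⟨z, p₀, hzA, hz0, hp₀, hdvd, hcong⟩ := hI2 f hfF
          exact ⟨z, p₀, hzA, hz0, hp₀, hdvd.mul_right m',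
            ((hC'C.of_dvd hdvd).add_right f).trans hcong⟩
      · intro q hq hqMm' hqL
        rcases (Nat.Prime.dvd_mul hq).mp hqMm' with hqM | hqm'
        · obtain ⟨hql, f, hfF, hqCf⟩ := hI3 q hq hqM hqL
          refine ⟨hql, f, Finset.mem_insert_of_mem hfF, ?_⟩
          have h1 : C' + f ≡ C + f [MOD q] := (hC'C.of_dvd hqM).add_right f
          have h2 : C + f ≡ 0 [MOD q] := Nat.modEq_zero_iff_dvd.mpr hqCf
          exact Nat.modEq_zero_iff_dvd.mp (h1.trans h2)
        · have hcongq : C' + e ≡ y * p ^ k [MOD q] := hnewcongm'.of_dvd hqm'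
          rcases (Nat.Prime.dvd_mul hq).mp hqm' with hqw | hqp
          · have hql : l < q := by
              by_contra hcon
              push_neg at hcon
              exact hqL (Nat.dvd_factorial hq.pos hcon)
            have hqy : q ∣ y * p ^ k := (hqw.trans hwy).mul_right _
            have hqCe : q ∣ C' + e := by
              have h2 : y * p ^ k ≡ 0 [MOD q] := Nat.modEq_zero_iff_dvd.mpr hqy
              exact Nat.modEq_zero_iff_dvd.mp (hcongq.trans h2)
            exact ⟨hql, e, Finset.mem_insert_self e F, hqCe⟩
          · have hqp' : q = p := (Nat.prime_dvd_prime_iff_eq hq hp).mp (hq.dvd_of_dvd_pow hqp)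
            subst hqp'
            have hql : l < q := by omega
            have hqy : q ∣ y * q ^ k := by
              exact Dvd.dvd.mul_left (dvd_pow_self q hk.ne') y
            have hqCe : q ∣ C' + e := by
              have h2 : y * q ^ k ≡ 0 [MOD q] := Nat.modEq_zero_iff_dvd.mpr hqy
              exact Nat.modEq_zero_iff_dvd.mp (hcongq.trans h2)
            exact ⟨hql, e, Finset.mem_insert_self e F, hqCe⟩

/-- every syndetic set contains a 2-term geometric progression with
common ratio `p ^ k * r` where `p` is prime and `r ≡ 1 (mod p)`. -/
theorem syndetic_geometric_prime_power (k : ℕ) (hk : 0 < k) (A : Set ℕ)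
    (hA : Syndetic A) :
    ∃ x r p : ℕ, p.Prime ∧ 0 < r ∧ r ≡ 1 [MOD p] ∧ x ∈ A ∧ x * p ^ k * r ∈ A := by
  obtain ⟨l, hl, hS⟩ := hA
  apply syndetic_aux A k l hk hl hS l ∅ 1 ((l.factorial) ^ 2)
  · simp
  · simp
  · positivity
  · exact dvd_rfl
  · rfl
  · intro f hf; simp at hf
  · intro q hq hqM hqL
    exact absurd (hq.dvd_of_dvd_pow hqM) hqL
end

section
/- Let k be a positive integer and let A be a syndetic subset of the natural numbers. Then there exist x, r ∈ ℕ and a composite number n (i.e., n ∈ ℕ, n > 1, n not prime) such that r ≡ 1 (mod n), x ∈ A, and x·n^k·r ∈ A; i.e., A contains a 2-term geometric progression with common ratio n^k·r. -/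
/-!
Build windows `[a, a + l)` with starts `a₀ < a₁ < ⋯ < a_l` such that for all `i < j` and
`t < l`, the number `a_j + t` is `(a_i + t) * n ^ k * r` with `n` composite and `r ≡ 1 [MOD n]`.
Since `A` is `l`-syndetic it meets each of these `l + 1` windows, and by pigeonhole two of the
hits sit at the same offset `t`.

The next start `Q` is found by the Chinese remainder theorem: `Q ≡ a_j [MOD (a_j + l)!]` makes
every `a_i + t` divide `Q + t`, and `Q + t ≡ (a_i + t) * n ^ k [MOD n ^ (k + 1)]` fixes the
`n`-adic part of the ratio, for a fresh composite `n ≡ 1` modulo everything used so far.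
-/

open Nat

def IsCompositePowerMultiple (k x y : ℕ) : Prop :=
  ∃ n r : ℕ, 1 < n ∧ ¬ n.Prime ∧ 0 < r ∧ r ≡ 1 [MOD n] ∧ y = x * n ^ k * r

theorem exists_modEq_and_add_modEq {m₁ m₂ : ℕ} (hco : Coprime m₁ m₂) (hm₂ : 0 < m₂)
    (a b t : ℕ) : ∃ q, q ≡ a [MOD m₁] ∧ q + t ≡ b [MOD m₂] := by
  obtain ⟨q, hq₁, hq₂⟩ := chineseRemainder hco a (b + t * (m₂ - 1))
  refine ⟨q, hq₁, (hq₂.add_right t).trans ?_⟩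
  have hsplit : b + t * (m₂ - 1) + t = b + m₂ * t := by
    obtain ⟨m, rfl⟩ := Nat.exists_eq_add_of_lt hm₂
    simp only [Nat.add_sub_cancel]; ring
  rw [hsplit]
  exact Nat.add_mul_mod_self_left b m₂ t

theorem exists_composite_modEq_one {M : ℕ} (hM : 0 < M) :
    ∃ n, 1 < n ∧ ¬ n.Prime ∧ n ≡ 1 [MOD M] := by
  have hsucc : M + 1 ≡ 1 [MOD M] := Nat.add_mod_left M 1
  exact ⟨(M + 1) ^ 2, Nat.one_lt_pow two_ne_zero (by omega), Prime.not_prime_pow le_rfl,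
    by simpa using hsucc.pow 2⟩

theorem exists_add_modEq_mul_pow {ι : Type*} (k : ℕ) (c t : ι → ℕ) (F : Finset ι)
    {M : ℕ} (hM : 0 < M) (T B : ℕ) :
    ∃ Q, B ≤ Q ∧ Q ≡ T [MOD M] ∧ ∀ i ∈ F, ∃ n, 1 < n ∧ ¬ n.Prime ∧ n ≡ 1 [MOD M] ∧
      Q + t i ≡ c i * n ^ k [MOD n ^ (k + 1)] := by
  classical
  induction F using Finset.induction_on generalizing M T with
  | empty =>
    refine ⟨T + B * M, ?_, Nat.add_mul_mod_self_right T B M, by simp⟩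
    nlinarith
  | insert i F _ ih =>
    obtain ⟨n, hn, hnp, hnM⟩ := exists_composite_modEq_one hM
    have hnpos : 0 < n ^ (k + 1) := pow_pos (by omega) _
    have hco : Coprime M (n ^ (k + 1)) :=
      ((coprime_of_mul_modEq_one 1 (by simpa using hnM)).pow_left _).symm
    obtain ⟨T₁, hT₁M, hT₁n⟩ := exists_modEq_and_add_modEq hco hnpos T (c i * n ^ k) (t i)
    obtain ⟨Q, hBQ, hQ, hF⟩ := ih (Nat.mul_pos hM hnpos) T₁
    refine ⟨Q, hBQ, (hQ.of_mul_right _).trans hT₁M, ?_⟩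
    rintro j hj
    rcases Finset.mem_insert.mp hj with rfl | hj
    · exact ⟨n, hn, hnp, hnM, ((hQ.of_mul_left _).add_right _).trans hT₁n⟩
    · obtain ⟨n', hn', hn'p, hn'M, hQn'⟩ := hF j hj
      exact ⟨n', hn', hn'p, hn'M.of_mul_right _, hQn'⟩

theorem exists_eq_mul_pow_mul_of_modEq {c m n k : ℕ} (hn : 1 < n) (hcn : Coprime c n)
    (hcm : c ∣ m) (h : m ≡ c * n ^ k [MOD n ^ (k + 1)]) :
    ∃ r, 0 < r ∧ r ≡ 1 [MOD n] ∧ m = c * n ^ k * r := by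
  have hc : 0 < c := Nat.pos_of_ne_zero fun hc0 => by
    rw [hc0, coprime_zero_left] at hcn; omega
  have hmod : m ≡ c * n ^ k [MOD c * n ^ (k + 1)] :=
    (modEq_and_modEq_iff_modEq_mul (hcn.pow_right _)).mp
      ⟨(modEq_zero_iff_dvd.mpr hcm).trans (modEq_zero_iff_dvd.mpr (dvd_mul_right c _)).symm, h⟩
  have hlt : c * n ^ k < c * n ^ (k + 1) :=
    Nat.mul_lt_mul_of_pos_left (Nat.pow_lt_pow_right hn k.lt_succ_self) hc
  have hrem : m % (c * n ^ (k + 1)) = c * n ^ k := by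
    rw [hmod, Nat.mod_eq_of_lt hlt]
  set q := m / (c * n ^ (k + 1))
  refine ⟨n * q + 1, succ_pos _, by simp [Nat.ModEq], ?_⟩
  calc m = c * n ^ (k + 1) * q + m % (c * n ^ (k + 1)) := (div_add_mod m _).symm
    _ = c * n ^ k * (n * q + 1) := by rw [hrem]; ring

def IsWindowChain (k l : ℕ) (S : Finset ℕ) : Prop :=
  ∀ a ∈ S, ∀ b ∈ S, a < b →
    b ≡ a [MOD (a + l)!] ∧ ∀ t < l, IsCompositePowerMultiple k (a + t) (b + t)

theorem exists_next_window (k l : ℕ) (S : Finset ℕ) {T : ℕ}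
    (hS : ∀ a ∈ S, 0 < a ∧ a ≤ T ∧ T ≡ a [MOD (a + l)!]) :
    ∃ Q, T < Q ∧ ∀ a ∈ S,
      Q ≡ a [MOD (a + l)!] ∧ ∀ t < l, IsCompositePowerMultiple k (a + t) (Q + t) := by
  obtain ⟨Q, hTQ, hQ, hres⟩ := exists_add_modEq_mul_pow k (fun p => p.1 + p.2) Prod.snd
    (S ×ˢ Finset.range l) (factorial_pos (T + l)) T (T + 1)
  refine ⟨Q, hTQ, fun a ha => ?_⟩
  obtain ⟨ha0, haT, hTa⟩ := hS a ha
  have hQa : Q ≡ a [MOD (a + l)!] := (hQ.of_dvd (factorial_dvd_factorial (by omega))).trans hTa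
  refine ⟨hQa, fun t ht => ?_⟩
  obtain ⟨n, hn, hnp, hnT, hQn⟩ := hres (a, t) (Finset.mem_product.mpr ⟨ha, by simpa using ht⟩)
  have hcT : a + t ∣ (T + l)! := dvd_factorial (by omega) (by omega)
  have hcn : Coprime (a + t) n :=
    (coprime_of_mul_modEq_one 1 (by simpa using hnT.of_dvd hcT)).symm
  have hcQ : a + t ∣ Q + t := by
    have hQa' : Q + t ≡ a + t [MOD a + t] :=
      (hQa.of_dvd (dvd_factorial (by omega) (by omega))).add_right t
    exact (modEq_zero_iff_dvd.mp (hQa'.trans (modEq_zero_iff_dvd.mpr dvd_rfl)))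
  obtain ⟨r, hr, hr1, hQr⟩ := exists_eq_mul_pow_mul_of_modEq hn hcn hcQ hQn
  exact ⟨n, r, hn, hnp, hr, hr1, hQr⟩

theorem IsWindowChain.exists_insert {k l : ℕ} {S : Finset ℕ} (hS : IsWindowChain k l S)
    (hpos : ∀ a ∈ S, 0 < a) {T : ℕ} (hT : T ∈ S) (hmax : ∀ a ∈ S, a ≤ T) :
    ∃ Q, T < Q ∧ IsWindowChain k l (insert Q S) := by
  have hTa : ∀ a ∈ S, T ≡ a [MOD (a + l)!] := fun a ha =>
    (hmax a ha).eq_or_lt.elim (fun h => h ▸ rfl) fun h => (hS a ha T hT h).1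
  obtain ⟨Q, hTQ, hQ⟩ :=
    exists_next_window k l S fun a ha => ⟨hpos a ha, hmax a ha, hTa a ha⟩
  refine ⟨Q, hTQ, fun a ha b hb hab => ?_⟩
  rcases Finset.mem_insert.mp ha with rfl | haS
  · rcases Finset.mem_insert.mp hb with rfl | hbS
    · exact absurd hab (lt_irrefl _)
    · exact absurd (hmax b hbS) (by omega)
  · rcases Finset.mem_insert.mp hb with rfl | hbS
    · exact hQ a haS
    · exact hS a haS b hbS hab

theorem exists_windowChain (k l m : ℕ) :
    ∃ S : Finset ℕ, S.card = m + 1 ∧ (∀ a ∈ S, 0 < a) ∧ IsWindowChain k l S := by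
  induction m with
  | zero => exact ⟨{1}, rfl, by simp, by simp [IsWindowChain]⟩
  | succ m ih =>
    obtain ⟨S, hcard, hpos, hS⟩ := ih
    have hne : S.Nonempty := Finset.card_pos.mp (by omega)
    obtain ⟨Q, hTQ, hQ⟩ := hS.exists_insert hpos (S.max'_mem hne) (S.le_max' · )
    have hQS : Q ∉ S := fun h => absurd (S.le_max' Q h) (by omega)
    refine ⟨insert Q S, by rw [Finset.card_insert_of_notMem hQS, hcard], ?_, hQ⟩
    intro a ha
    rcases Finset.mem_insert.mp ha with rfl | ha
    · exact lt_of_le_of_lt (Nat.zero_le _) hTQ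
    · exact hpos a ha

theorem SyndeticWith.exists_lt_add_mem {A : Set ℕ} {l : ℕ} (hA : SyndeticWith A l)
    {S : Finset ℕ} (hpos : ∀ a ∈ S, 0 < a) (hcard : l < S.card) :
    ∃ a ∈ S, ∃ b ∈ S, a < b ∧ ∃ t < l, a + t ∈ A ∧ b + t ∈ A := by
  choose! y hyA hy using hA
  have hoff : ∀ a ∈ S, y a = a + (y a - a) ∧ y a - a < l := fun a ha => by
    have := hy a (hpos a ha); omega
  obtain ⟨a, ha, b, hb, hab, hyab⟩ := Finset.exists_ne_map_eq_of_card_lt_of_maps_to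
    (t := Finset.range l) (f := fun a => y a - a) (by simpa using hcard) fun a ha => by
      simpa using (hoff a ha).2
  wlog h : a < b generalizing a b
  · exact this b hb a ha hab.symm hyab.symm (hab.lt_or_gt.resolve_left h)
  refine ⟨a, ha, b, hb, h, y a - a, (hoff a ha).2, ?_, ?_⟩
  · rw [← (hoff a ha).1]; exact hyA a (hpos a ha)
  · rw [show y a - a = y b - b from hyab, ← (hoff b hb).1]; exact hyA b (hpos b hb)

theorem syndetic_geometric_composite_power_general (k : ℕ) (A : Set ℕ)
    (hA : Syndetic A) :
    ∃ x r n : ℕ, 1 < n ∧ ¬ n.Prime ∧ 0 < r ∧ r ≡ 1 [MOD n] ∧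
      x ∈ A ∧ x * n ^ k * r ∈ A := by
  obtain ⟨l, -, hl⟩ := hA
  obtain ⟨S, hcard, hpos, hS⟩ := exists_windowChain k l l
  obtain ⟨a, ha, b, hb, hab, t, ht, haA, hbA⟩ := hl.exists_lt_add_mem hpos (by omega)
  obtain ⟨n, r, hn, hnp, hr, hr1, hba⟩ := (hS a ha b hb hab).2 t ht
  exact ⟨a + t, r, n, hn, hnp, hr, hr1, haA, hba ▸ hbA⟩

/-- every syndetic set contains a 2-term geometric progression with
common ratio `n ^ k * r` where `n` is composite and `r ≡ 1 (mod n)`. -/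
theorem syndetic_geometric_composite_power (k : ℕ) (hk : 0 < k) (A : Set ℕ)
    (hA : Syndetic A) :
    ∃ x r n : ℕ, 1 < n ∧ ¬ n.Prime ∧ 0 < r ∧ r ≡ 1 [MOD n] ∧
      x ∈ A ∧ x * n ^ k * r ∈ A :=
  syndetic_geometric_composite_power_general k A hA
end

section
/- Let S be a 2-syndetic subset of the natural numbers. Then the set of pairs (x, r) ∈ ℕ × ℕ with r ≥ 2, x ∈ S and x·r² ∈ S is infinite; i.e., S contains infinitely many 2-term geometric progressions whose common ratios are perfect squares. -/
/-- Key step: from any `x ∈ S` with `x ≥ 1`, a 2-syndetic set `S` contains a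
2-term geometric progression with square ratio whose first term is at least `x`. -/
lemma two_syndetic_key (S : Set ℕ) (hS : SyndeticWith S 2) (n : ℕ) :
    ∃ p : ℕ × ℕ, (2 ≤ p.2 ∧ p.1 ∈ S ∧ p.1 * p.2 ^ 2 ∈ S) ∧ n < p.1 := by
  obtain ⟨x, hxS, hx1, hx2⟩ := hS (n + 1) (by omega)
  have hxpos : 1 ≤ x := by omega
  obtain ⟨a, haS, ha1, ha2⟩ := hS (256 * x) (by omega)
  rcases (by omega : a = 256 * x ∨ a = 256 * x + 1) with h | hA
  · exact ⟨(x, 16), ⟨by omega, hxS, by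
      rw [show x * 16 ^ 2 = 256 * x by ring, ← h]; exact haS⟩, by omega⟩
  rw [hA] at haS
  -- now 256 * x + 1 ∈ S
  obtain ⟨b, hbS, hb1, hb2⟩ := hS (324 * x) (by omega)
  rcases (by omega : b = 324 * x ∨ b = 324 * x + 1) with h | hB
  · exact ⟨(x, 18), ⟨by omega, hxS, by
      rw [show x * 18 ^ 2 = 324 * x by ring, ← h]; exact hbS⟩, by omega⟩
  rw [hB] at hbS
  -- now 324 * x + 1 ∈ S
  obtain ⟨c, hcS, hc1, hc2⟩ := hS (1296 * x + 4) (by omega)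
  rcases (by omega : c = 1296 * x + 4 ∨ c = 1296 * x + 5) with h | hC
  · exact ⟨(324 * x + 1, 2), ⟨by omega, hbS, by
      rw [show (324 * x + 1) * 2 ^ 2 = 1296 * x + 4 by ring, ← h]; exact hcS⟩, by omega⟩
  rw [hC] at hcS
  -- now 1296 * x + 5 ∈ S
  obtain ⟨d, hdS, hd1, hd2⟩ := hS (20736 * x + 80) (by omega)
  rcases (by omega : d = 20736 * x + 80 ∨ d = 20736 * x + 81) with h | hD
  · exact ⟨(1296 * x + 5, 4), ⟨by omega, hcS, by
      rw [show (1296 * x + 5) * 4 ^ 2 = 20736 * x + 80 by ring, ← h]; exact hdS⟩, by omega⟩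
  · rw [hD] at hdS
    exact ⟨(256 * x + 1, 9), ⟨by omega, haS, by
      rw [show (256 * x + 1) * 9 ^ 2 = 20736 * x + 81 by ring]; exact hdS⟩, by omega⟩

/-- a 2-syndetic set contains infinitely many 2-term geometric
progressions whose common ratios are perfect squares. -/
theorem two_syndetic_infinitely_many_square_ratios (S : Set ℕ)
    (hS : SyndeticWith S 2) :
    {p : ℕ × ℕ | 2 ≤ p.2 ∧ p.1 ∈ S ∧ p.1 * p.2 ^ 2 ∈ S}.Infinite := by
  set T : Set (ℕ × ℕ) := {p : ℕ × ℕ | 2 ≤ p.2 ∧ p.1 ∈ S ∧ p.1 * p.2 ^ 2 ∈ S} with hT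
  have himg : (Prod.fst '' T).Infinite := by
    apply Set.infinite_of_not_bddAbove
    rintro ⟨B, hB⟩
    obtain ⟨p, hp, hlt⟩ := two_syndetic_key S hS B
    have : p.1 ≤ B := hB ⟨p, hp, rfl⟩
    omega
  exact Set.Infinite.of_image _ himg
end

section
/- Let A ⊆ ℕ be an additively piecewise syndetic set. Then there exists a sequence (y_n)_{n=1}^∞ in ℕ \ {1} such that for each n ∈ ℕ, y_{n+1} ≡ 1 (mod ∏_{i=1}^{n} y_i) and ∏_{i=1}^{n} y_i ∈ A. -/
/-
We prove that an additively piecewise syndetic set `A ⊆ ℕ` admits a sequence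
`(y_n)` with `y_n ≥ 2`, `y_{n+1} ≡ 1 (mod ∏_{i≤n} y_i)` and all partial
products in `A`.

Outline: the union `W` of the translates `A - t`, `t ≤ l`, is thick.  The set
of ultrafilters containing every set
`B_k = {z ≥ k : m ∣ z for all 1 ≤ m ≤ k, and z + t ∈ W for all t ≤ k}`
is a nonempty closed subsemigroup of the additive ultrafilter semigroup on ℕ,
so by the Ellis lemma it contains an additive idempotent `e`.  Some translate
`A - n₀` with `n₀ ≤ l` belongs to `e`; a Galvin–Glazer recursion, always
choosing the next increment inside `e`, divisible by the square of the current
partial product `P` (possible since `e` contains all `mℕ`), produces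
`P_{k+1} = P_k + x` with `P_k ^ 2 ∣ x`, whence `y_{k+1} := P_{k+1} / P_k ≡ 1
(mod P_k)`.
-/

open Filter Set

attribute [local instance] Ultrafilter.add Ultrafilter.addSemigroup

namespace APSAux

lemma mem_add_ultra {U V : Ultrafilter ℕ} {S : Set ℕ} :
    S ∈ U + V ↔ {a : ℕ | {b : ℕ | a + b ∈ S} ∈ V} ∈ U := Iff.rfl

/-- The union of small translates of `A`. -/
def Wset (A : Set ℕ) (l : ℕ) : Set ℕ := {z | ∃ t, t ≤ l ∧ z + t ∈ A}

/-- Basic sets generating our subsemigroup of ultrafilters. -/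
def Bk (A : Set ℕ) (l k : ℕ) : Set ℕ :=
  {z | k ≤ z ∧ (∀ m, 1 ≤ m → m ≤ k → m ∣ z) ∧ ∀ t, t ≤ k → z + t ∈ Wset A l}

variable {A : Set ℕ} {l : ℕ}

/-- `Wset A l` is thick. -/
lemma wset_thick (hl : 0 < l)
    (hrun : ∀ n : ℕ, ∃ x : ℕ → ℕ,
      (∀ i, 1 ≤ i → i ≤ n → x i ∈ A) ∧
      ∀ i, 1 ≤ i → i + 1 ≤ n → x i < x (i + 1) ∧ x (i + 1) ≤ x i + l) :
    ∀ N : ℕ, ∃ a : ℕ, ∀ i, i ≤ N → a + i ∈ Wset A l := by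
  intro N
  obtain ⟨x, hxA, hgap⟩ := hrun (N + 1)
  -- growth of the run
  have hgrow : ∀ d : ℕ, 1 + d ≤ N + 1 → x 1 + d ≤ x (1 + d) := by
    intro d
    induction d with
    | zero => simp
    | succ m ih =>
      intro hm
      have h1 : x 1 + m ≤ x (1 + m) := ih (by omega)
      have h2 : x (1 + m) < x (1 + m + 1) :=
        (hgap (1 + m) (by omega) (by omega)).1
      have h3 : (1 : ℕ) + (m + 1) = 1 + m + 1 := by omega
      rw [h3]; omega
  refine ⟨x 1, ?_⟩
  intro i hi
  -- z := x 1 + i lies in [x 1, x (N+1)]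
  have hzle : x 1 + i ≤ x (N + 1) := by
    have h := hgrow N (by omega)
    have h1N : (1 : ℕ) + N = N + 1 := by omega
    rw [h1N] at h
    omega
  classical
  have hj1 : 1 ≤ Nat.findGreatest (fun j => x j ≤ x 1 + i) (N + 1) :=
    Nat.le_findGreatest (m := 1) (by omega) (by omega)
  have hjle : Nat.findGreatest (fun j => x j ≤ x 1 + i) (N + 1) ≤ N + 1 :=
    Nat.findGreatest_le _
  have hjspec : x (Nat.findGreatest (fun j => x j ≤ x 1 + i) (N + 1)) ≤ x 1 + i :=
    Nat.findGreatest_spec (P := fun j => x j ≤ x 1 + i) (m := 1) (by omega) (by omega)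
  set j := Nat.findGreatest (fun j => x j ≤ x 1 + i) (N + 1) with hj
  rcases eq_or_lt_of_le hjle with hNe | hlt
  · -- j = N+1 : z = x (N+1)
    rw [hNe] at hjspec
    refine ⟨0, by omega, ?_⟩
    rw [show x 1 + i + 0 = x (N + 1) by omega]
    exact hxA (N + 1) (by omega) le_rfl
  · have hnP : ¬ x (j + 1) ≤ x 1 + i :=
      Nat.findGreatest_is_greatest (P := fun j => x j ≤ x 1 + i) (n := N + 1) (k := j + 1)
        (by omega) (by omega)
    have hg := hgap j hj1 (by omega)
    refine ⟨x (j + 1) - (x 1 + i), by omega, ?_⟩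
    rw [show x 1 + i + (x (j + 1) - (x 1 + i)) = x (j + 1) by omega]
    exact hxA (j + 1) (by omega) (by omega)

lemma Bk_nonempty (hthick : ∀ N : ℕ, ∃ a : ℕ, ∀ i, i ≤ N → a + i ∈ Wset A l) (k : ℕ) :
    (Bk A l k).Nonempty := by
  obtain ⟨a, ha⟩ := hthick (k.factorial + k)
  have hfac : 0 < k.factorial := Nat.factorial_pos k
  have hdm := Nat.div_add_mod a k.factorial
  have hmlt : a % k.factorial < k.factorial := Nat.mod_lt _ hfac
  have hexp : k.factorial * (a / k.factorial + 1)
      = k.factorial * (a / k.factorial) + k.factorial := by ring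
  refine ⟨k.factorial * (a / k.factorial + 1), ?_, ?_, ?_⟩
  · have h1 : k ≤ k.factorial := Nat.self_le_factorial k
    omega
  · intro m hm1 hm2
    exact dvd_mul_of_dvd_left (Nat.dvd_factorial hm1 hm2) _
  · intro t ht
    have haz : a ≤ k.factorial * (a / k.factorial + 1) := by omega
    have hza : k.factorial * (a / k.factorial + 1) + t ≤ a + (k.factorial + k) := by omega
    have := ha (k.factorial * (a / k.factorial + 1) + t - a) (by omega)
    rwa [show a + (k.factorial * (a / k.factorial + 1) + t - a)
        = k.factorial * (a / k.factorial + 1) + t by omega] at this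

lemma Bk_anti (k : ℕ) : Bk A l (k + 1) ⊆ Bk A l k := by
  rintro z ⟨h1, h2, h3⟩
  exact ⟨by omega, fun m hm1 hm2 => h2 m hm1 (by omega), fun t ht => h3 t (by omega)⟩

lemma Bk_add {a b k : ℕ} (hab : a ∈ Bk A l k) (hb : b ∈ Bk A l (a + k)) :
    a + b ∈ Bk A l k := by
  obtain ⟨ha1, ha2, ha3⟩ := hab
  obtain ⟨hb1, hb2, hb3⟩ := hb
  refine ⟨by omega, ?_, ?_⟩
  · intro m hm1 hm2
    exact Nat.dvd_add (ha2 m hm1 hm2) (hb2 m hm1 (by omega))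
  · intro t ht
    have := hb3 (a + t) (by omega)
    rwa [show b + (a + t) = a + b + t by omega] at this

/-- There is an additive idempotent ultrafilter containing all the sets `Bk A l k`. -/
lemma exists_idem (hthick : ∀ N : ℕ, ∃ a : ℕ, ∀ i, i ≤ N → a + i ∈ Wset A l) :
    ∃ e : Ultrafilter ℕ, e + e = e ∧ ∀ k, Bk A l k ∈ e := by
  classical
  have h := exists_idempotent_in_compact_add_subsemigroup
    (M := Ultrafilter ℕ) Ultrafilter.continuous_add_left
    (⋂ k, {U : Ultrafilter ℕ | Bk A l k ∈ U}) ?_ ?_ ?_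
  · obtain ⟨e, he, hee⟩ := h
    exact ⟨e, hee, fun k => Set.mem_iInter.mp he k⟩
  · -- nonempty
    apply IsCompact.nonempty_iInter_of_sequence_nonempty_isCompact_isClosed
    · intro k U hU
      exact Filter.mem_of_superset hU (Bk_anti k)
    · intro k
      obtain ⟨z, hz⟩ := Bk_nonempty hthick k
      exact ⟨pure z, hz⟩
    · exact (ultrafilter_isClosed_basic _).isCompact
    · intro k; exact ultrafilter_isClosed_basic _
  · exact IsClosed.isCompact (isClosed_iInter fun k => ultrafilter_isClosed_basic _)
  · -- subsemigroup
    intro U hU V hV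
    rw [Set.mem_iInter] at *
    intro k
    rw [Set.mem_setOf_eq, mem_add_ultra]
    refine Filter.mem_of_superset (hU k) ?_
    intro a ha
    exact Filter.mem_of_superset (hV (a + k)) (fun b hb => Bk_add ha hb)

/-- States of the Galvin–Glazer recursion. -/
def GoodState (A : Set ℕ) (e : Ultrafilter ℕ) (n₀ : ℕ) :=
  {p : ℕ × Set ℕ // p.2 ∈ e ∧ ∀ z ∈ p.2, n₀ + p.1 + z ∈ A}

/-- The Galvin–Glazer recursion: from an additive idempotent ultrafilter `e`
containing a translate of `A`, all sets of multiples, and all cofinite sets,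
we extract the desired sequence. -/
lemma main_chain (A : Set ℕ) (e : Ultrafilter ℕ) (hidem : e + e = e)
    (hdiv : ∀ m : ℕ, 0 < m → {z : ℕ | m ∣ z} ∈ e)
    (hge : ∀ N : ℕ, {z : ℕ | N ≤ z} ∈ e)
    (n₀ : ℕ) (hA' : {z : ℕ | z + n₀ ∈ A} ∈ e) :
    ∃ y : ℕ → ℕ, (∀ n, 1 ≤ n → 2 ≤ y n) ∧
      ∀ n, 1 ≤ n →
        y (n + 1) ≡ 1 [MOD ∏ i ∈ Finset.Icc 1 n, y i] ∧
        (∏ i ∈ Finset.Icc 1 n, y i) ∈ A := by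
  classical
  -- star lemma
  have hstar : ∀ S : Set ℕ, S ∈ e → {a : ℕ | {b : ℕ | a + b ∈ S} ∈ e} ∈ e := by
    intro S hS
    have h : S ∈ e + e := by rw [hidem]; exact hS
    exact (mem_add_ultra).mp h
  -- single step
  have hstep : ∀ q : GoodState A e n₀, ∃ x : ℕ,
      (2 ≤ x ∧ max 1 ((n₀ + q.1.1) * (n₀ + q.1.1)) ∣ x) ∧ (n₀ + q.1.1 + x ∈ A) ∧
        ({y : ℕ | x + y ∈ q.1.2} ∈ e ∧
          ∀ z ∈ {y : ℕ | x + y ∈ q.1.2}, n₀ + (q.1.1 + x) + z ∈ A) := by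
    rintro ⟨⟨σ, S⟩, hS, hsubA⟩
    have hT : (S ∩ ({a : ℕ | {b : ℕ | a + b ∈ S} ∈ e} ∩
        ({z : ℕ | max 1 ((n₀ + σ) * (n₀ + σ)) ∣ z} ∩ {z : ℕ | 2 ≤ z}))) ∈ e :=
      Filter.inter_mem hS (Filter.inter_mem (hstar S hS)
        (Filter.inter_mem (hdiv _ (lt_of_lt_of_le one_pos (le_max_left _ _))) (hge 2)))
    obtain ⟨x, hx1, hx2, hx3, hx4⟩ := Ultrafilter.nonempty_of_mem hT
    refine ⟨x, ⟨hx4, hx3⟩, hsubA x hx1, hx2, ?_⟩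
    intro z hz
    rw [show n₀ + (σ + x) + z = n₀ + σ + (x + z) by omega]
    exact hsubA _ hz
  choose xf hxf using hstep
  -- the recursion
  let st : ℕ → GoodState A e n₀ := fun k => Nat.rec
    ⟨(0, {z : ℕ | z + n₀ ∈ A}), hA', fun z hz => by
      rw [show n₀ + 0 + z = z + n₀ by omega]; exact hz⟩
    (fun _ q => ⟨(q.1.1 + xf q, {y : ℕ | xf q + y ∈ q.1.2}), (hxf q).2.2⟩) k
  let σf : ℕ → ℕ := fun k => (st k).1.1
  let xs : ℕ → ℕ := fun k => xf (st k)
  let P : ℕ → ℕ := fun k => n₀ + σf k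
  have hσ : ∀ k, σf (k + 1) = σf k + xs k := fun k => rfl
  have hxs2 : ∀ k, 2 ≤ xs k := fun k => (hxf (st k)).1.1
  have hdvdP : ∀ k, max 1 (P k * P k) ∣ xs k := fun k => (hxf (st k)).1.2
  have hPA : ∀ k, P (k + 1) ∈ A := by
    intro k
    have h := (hxf (st k)).2.1
    show n₀ + σf (k + 1) ∈ A
    rw [hσ k, ← add_assoc]
    exact h
  have hP2 : ∀ k, 2 ≤ P (k + 1) := by
    intro k
    have h1 := hxs2 k
    have h2 := hσ k
    show 2 ≤ n₀ + σf (k + 1)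
    omega
  have hdvd' : ∀ k, (P (k + 1) * P (k + 1)) ∣ xs (k + 1) := by
    intro k
    have h := hdvdP (k + 1)
    rwa [max_eq_right (Nat.mul_pos (by have := hP2 k; omega)
      (by have := hP2 k; omega) : 0 < P (k+1) * P (k+1))] at h
  -- the sequence y
  let y : ℕ → ℕ := fun n => match n with
    | 0 => 2
    | 1 => P 1
    | (m + 2) => 1 + xs (m + 1) / (P (m + 1) * P (m + 1)) * P (m + 1)
  have hy1 : y 1 = P 1 := rfl
  have hysucc : ∀ m : ℕ, y (m + 2)
      = 1 + xs (m + 1) / (P (m + 1) * P (m + 1)) * P (m + 1) := fun m => rfl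
  have hPpos : ∀ m : ℕ, 0 < P (m + 1) * P (m + 1) := fun m =>
    Nat.mul_pos (by have := hP2 m; omega) (by have := hP2 m; omega)
  have hcpos : ∀ m : ℕ, 1 ≤ xs (m + 1) / (P (m + 1) * P (m + 1)) := by
    intro m
    have hd := hdvd' m
    have hx2 := hxs2 (m + 1)
    exact (Nat.one_le_div_iff (hPpos m)).mpr (Nat.le_of_dvd (by omega) hd)
  have hy2 : ∀ n, 1 ≤ n → 2 ≤ y n := by
    intro n hn
    match n with
    | 1 => exact hP2 0
    | (m + 2) =>
      have h1 := hcpos m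
      have h2 := hP2 m
      have h3 : 1 * 2 ≤ xs (m + 1) / (P (m + 1) * P (m + 1)) * P (m + 1) :=
        Nat.mul_le_mul h1 h2
      rw [hysucc m]; omega
  -- product formula
  have hPmul : ∀ m : ℕ, P (m + 1) * y (m + 2) = P (m + 2) := by
    intro m
    rw [hysucc m, Nat.mul_add, Nat.mul_one]
    have h1 : P (m + 1) * (xs (m + 1) / (P (m + 1) * P (m + 1)) * P (m + 1))
        = xs (m + 1) / (P (m + 1) * P (m + 1)) * (P (m + 1) * P (m + 1)) := by ring
    rw [h1, Nat.div_mul_cancel (hdvd' m)]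
    show P (m + 1) + xs (m + 1) = n₀ + σf (m + 2)
    rw [hσ (m + 1)]
    show n₀ + σf (m + 1) + xs (m + 1) = n₀ + (σf (m + 1) + xs (m + 1))
    omega
  have hprod : ∀ n, 1 ≤ n → (∏ i ∈ Finset.Icc 1 n, y i) = P n := by
    intro n hn
    induction n with
    | zero => omega
    | succ m ih =>
      rcases Nat.eq_zero_or_pos m with hm | hm
      · subst hm
        simp [hy1]
      · rw [Finset.prod_Icc_succ_top (by omega : 1 ≤ m + 1), ih (by omega)]
        obtain ⟨m', rfl⟩ : ∃ m', m = m' + 1 := ⟨m - 1, by omega⟩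
        exact hPmul m'
  -- congruence
  have hmod : ∀ n, 1 ≤ n → y (n + 1) ≡ 1 [MOD P n] := by
    intro n hn
    obtain ⟨m, rfl⟩ : ∃ m, n = m + 1 := ⟨n - 1, by omega⟩
    rw [hysucc m]
    have h : (1 + xs (m + 1) / (P (m + 1) * P (m + 1)) * P (m + 1)) ≡ 1 + 0 [MOD P (m + 1)] :=
      Nat.ModEq.add_left 1 (Nat.modEq_zero_iff_dvd.mpr (dvd_mul_left _ _))
    simpa using h
  refine ⟨y, hy2, ?_⟩
  intro n hn
  refine ⟨?_, ?_⟩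
  · rw [hprod n hn]; exact hmod n hn
  · rw [hprod n hn]
    obtain ⟨m, rfl⟩ : ∃ m, n = m + 1 := ⟨n - 1, by omega⟩
    exact hPA m

end APSAux

/-- `A ⊆ ℕ` is additively piecewise syndetic: for some `l`, for every `n` there is
a finite sequence `x_1, …, x_n` in `A` with consecutive gaps in `(0, l]`. -/
def AddPiecewiseSyndetic (A : Set ℕ) : Prop :=
  ∃ l : ℕ, 0 < l ∧ ∀ n : ℕ, ∃ x : ℕ → ℕ,
    (∀ i, 1 ≤ i → i ≤ n → x i ∈ A) ∧
    ∀ i, 1 ≤ i → i + 1 ≤ n → x i < x (i + 1) ∧ x (i + 1) ≤ x i + l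

/-- an additively piecewise syndetic set admits a sequence
`(y_n)_{n≥1}` in `ℕ \ {1}` with `y_{n+1} ≡ 1 (mod ∏_{i=1}^n y_i)` and
`∏_{i=1}^n y_i ∈ A` for every `n ≥ 1`. -/
theorem addPiecewiseSyndetic_product_sequence (A : Set ℕ)
    (hA : AddPiecewiseSyndetic A) :
    ∃ y : ℕ → ℕ, (∀ n, 1 ≤ n → 2 ≤ y n) ∧
      ∀ n, 1 ≤ n →
        y (n + 1) ≡ 1 [MOD ∏ i ∈ Finset.Icc 1 n, y i] ∧
        (∏ i ∈ Finset.Icc 1 n, y i) ∈ A := by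
  classical
  obtain ⟨l, hl, hrun⟩ := hA
  have hthick := APSAux.wset_thick hl hrun
  obtain ⟨e, hidem, hBe⟩ := APSAux.exists_idem hthick
  have hdiv : ∀ m : ℕ, 0 < m → {z : ℕ | m ∣ z} ∈ e := fun m hm =>
    Filter.mem_of_superset (hBe m) (fun z hz => hz.2.1 m hm le_rfl)
  have hge : ∀ N : ℕ, {z : ℕ | N ≤ z} ∈ e := fun N =>
    Filter.mem_of_superset (hBe N) (fun z hz => hz.1)
  have hWe : APSAux.Wset A l ∈ e :=
    Filter.mem_of_superset (hBe 0) (fun z hz => by simpa using hz.2.2 0 le_rfl)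
  have hsub : APSAux.Wset A l ⊆ ⋃ t ∈ Set.Iic l, {z : ℕ | z + t ∈ A} := by
    rintro z ⟨t, ht, hzt⟩
    exact Set.mem_biUnion ht hzt
  have hU : (⋃ t ∈ Set.Iic l, {z : ℕ | z + t ∈ A}) ∈ e := Filter.mem_of_superset hWe hsub
  obtain ⟨n₀, -, hA'⟩ := (Ultrafilter.finite_biUnion_mem_iff (Set.finite_Iic l)).mp hU
  exact APSAux.main_chain A e hidem hdiv hge n₀ hA'
end

section
/- There exists a thick subset A of ℕ such that there do not exist a ∈ A and a rational number r ≠ 1 with a·r ∈ A and a·r² ∈ A (where a·r and a·r² are required to be natural numbers lying in A). -/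
/-!
The set is a union of blocks `[s k, s k + k]` whose starts grow so fast that every block begins
beyond the square of the end of the previous one. If `b² = a c` with `a < b`, then `b < c`, and
with `x = b - a`, `y = c - b` the equation reads `b (y - x) = x y`, so `x < y` and `b < y²`.
Hence `b` and `c` cannot lie in one block `[s, s + k]`, since `k² ≤ s`; and in different blocks
either `b² < c ≤ a c` or `c² < b < c`.
-/

/-- `A ⊆ ℕ` is thick: it contains arbitrarily long intervals. -/
def Thick (A : Set ℕ) : Prop := ∀ n : ℕ, ∃ m : ℕ, Set.Icc m (m + n) ⊆ A

theorem lt_sub_sq_of_sq_eq_mul {a b c : ℕ} (hab : a < b) (h : b ^ 2 = a * c) :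
    b < (c - b) ^ 2 := by
  obtain ⟨x, hx, rfl⟩ : ∃ x, 0 < x ∧ b = a + x := ⟨b - a, by omega, by omega⟩
  have hbc : a + x < c := by nlinarith
  obtain ⟨y, hy, rfl⟩ : ∃ y, 0 < y ∧ c = a + x + y := ⟨c - (a + x), by omega, by omega⟩
  have key : (a + x) * y = (a + x) * x + x * y := by nlinarith
  have hxy : x < y := by nlinarith
  rw [Nat.add_sub_cancel_left]
  nlinarith

def blockStart : ℕ → ℕ
  | 0 => 1
  | k + 1 => (blockStart k + k) ^ 2 + 1

def block (k : ℕ) : Set ℕ := Set.Icc (blockStart k) (blockStart k + k)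

def sparseBlocks : Set ℕ := ⋃ k, block k

theorem blockStart_strictMono : StrictMono blockStart :=
  strictMono_nat_of_lt_succ fun k => by
    show blockStart k < (blockStart k + k) ^ 2 + 1
    exact Nat.lt_succ_of_le ((Nat.le_add_right _ _).trans (Nat.le_self_pow two_ne_zero _))

theorem one_le_blockStart (k : ℕ) : 1 ≤ blockStart k :=
  blockStart_strictMono.monotone (Nat.zero_le k)

theorem sq_le_blockStart (k : ℕ) : k ^ 2 ≤ blockStart k := by
  cases k with
  | zero => simp
  | succ k =>
    show (k + 1) ^ 2 ≤ (blockStart k + k) ^ 2 + 1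
    have := one_le_blockStart k
    exact (Nat.pow_le_pow_left (by omega) 2).trans (Nat.le_succ _)

theorem sq_lt_of_mem_block_of_lt {i j x y : ℕ} (hij : i < j) (hx : x ∈ block i)
    (hy : y ∈ block j) : x ^ 2 < y :=
  calc x ^ 2 ≤ (blockStart i + i) ^ 2 := Nat.pow_le_pow_left hx.2 2
    _ < blockStart (i + 1) := Nat.lt_succ_self _
    _ ≤ blockStart j := blockStart_strictMono.monotone hij
    _ ≤ y := hy.1

theorem thick_sparseBlocks : Thick sparseBlocks := fun n =>
  ⟨blockStart n, Set.subset_iUnion block n⟩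

theorem pos_of_mem_sparseBlocks {x : ℕ} (hx : x ∈ sparseBlocks) : 0 < x := by
  obtain ⟨k, hk⟩ := Set.mem_iUnion.mp hx
  exact (one_le_blockStart k).trans hk.1

theorem sq_ne_mul_of_lt {a b c : ℕ} (hb : b ∈ sparseBlocks) (hc : c ∈ sparseBlocks)
    (hab : a < b) : b ^ 2 ≠ a * c := by
  intro h
  obtain ⟨l, hbl⟩ := Set.mem_iUnion.mp hb
  obtain ⟨j, hcj⟩ := Set.mem_iUnion.mp hc
  have hb_lt := lt_sub_sq_of_sq_eq_mul hab h
  have hbc : b < c := by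
    by_contra! hcb
    simp [Nat.sub_eq_zero_of_le hcb] at hb_lt
  rcases lt_trichotomy l j with hlj | rfl | hjl
  · have ha : 0 < a := Nat.pos_of_ne_zero fun ha0 => by simp [ha0] at h; omega
    have := sq_lt_of_mem_block_of_lt hlj hbl hcj
    nlinarith
  · have hcb : c - b ≤ l := by have := hbl.1; have := hcj.2; omega
    refine absurd ?_ (lt_irrefl b)
    calc b < (c - b) ^ 2 := hb_lt
      _ ≤ l ^ 2 := Nat.pow_le_pow_left hcb 2
      _ ≤ blockStart l := sq_le_blockStart l
      _ ≤ b := hbl.1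
  · have := sq_lt_of_mem_block_of_lt hjl hcj hbl
    nlinarith

theorem eq_of_sq_eq_mul {a b c : ℕ} (ha : a ∈ sparseBlocks) (hb : b ∈ sparseBlocks)
    (hc : c ∈ sparseBlocks) (h : b ^ 2 = a * c) : b = a := by
  by_contra hne
  rcases lt_or_gt_of_ne hne with hba | hab
  · have hcb : c < b := by
      by_contra! hbc
      nlinarith [Nat.mul_le_mul_left a hbc,
        Nat.mul_lt_mul_of_pos_right hba (pos_of_mem_sparseBlocks hb)]
    exact sq_ne_mul_of_lt hb ha hcb (h.trans (mul_comm a c))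
  · exact sq_ne_mul_of_lt hb hc hab h

/-- there is a thick set `A ⊆ ℕ` containing no configuration
`{a, a·r, a·r²}` with `a ∈ A` and `r ∈ ℚ`, `r ≠ 1`. -/
theorem exists_thick_no_three_term_gp :
    ∃ A : Set ℕ, Thick A ∧
      ¬∃ a ∈ A, ∃ r : ℚ, r ≠ 1 ∧ ∃ b ∈ A, ∃ c ∈ A,
        (b : ℚ) = (a : ℚ) * r ∧ (c : ℚ) = (a : ℚ) * r ^ 2 := by
  refine ⟨sparseBlocks, thick_sparseBlocks, ?_⟩
  rintro ⟨a, ha, r, hr, b, hb, c, hc, hbr, hcr⟩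
  have hsq : b ^ 2 = a * c := by
    have : (b : ℚ) ^ 2 = a * c := by rw [hbr, hcr]; ring
    exact_mod_cast this
  have ha0 : (a : ℚ) ≠ 0 := by exact_mod_cast (pos_of_mem_sparseBlocks ha).ne'
  apply hr
  have : (a : ℚ) * r = a * 1 := by rw [← hbr, mul_one, eq_of_sq_eq_mul ha hb hc hsq]
  exact mul_left_cancel₀ ha0 this
end

section
/- Let h, k ∈ ℕ, let A ⊆ ℕ be an infinite set, and let B ⊆ ℕ be a pairwise prime set with |B| = h such that uB ⊆ A for some u ∈ ℕ. Let H ⊆ ℕ be a pairwise prime set with |H| = |B| and gcd(a, b) = 1 for all a ∈ H and b ∈ B. Then at least one of the following holds: (1) there exist x, r ∈ ℕ and n ∈ H with r ≡ 1 (mod n), x ∈ A and x·n^k·r ∈ A; or (2) there exists z' ∈ ℕ such that for every t ∈ ℕ, setting z_t = z' + t·(∏_{x∈B} x²)·(∏_{x∈H} x^{2k}), the set u·[z_t, z_t + h − 1] = {u·m : z_t ≤ m ≤ z_t + h − 1} is disjoint from A. -/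
/-!
Enumerate `B = {b₀, …, b_{h-1}}` and `H = {n₀, …, n_{h-1}}`. The moduli `bᵢ nᵢ^(k+1)` are pairwise
coprime and all divide the period `∏ b² ∏ n^(2k)`, so by the Chinese remainder theorem there is a
`z'` with `z' + i ≡ bᵢ nᵢ^k (mod bᵢ nᵢ^(k+1))` for every `i`, and the same congruences hold for
every translate `z_t`. Each `m = z_t + j` of the block is then `bⱼ nⱼ^k r` with `r ≡ 1 (mod nⱼ)`,
so `u m = (u bⱼ) nⱼ^k r` with `u bⱼ ∈ A`: either `u m ∉ A`, or the first alternative holds.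
-/

namespace Nat

theorem exists_add_modEq_of_pairwise_coprime {ι : Type*} [Fintype ι] (q c d : ι → ℕ)
    (hq : ∀ i, q i ≠ 0) (hcop : Pairwise (Function.onFun Coprime q)) :
    ∃ z, ∀ i, z + d i ≡ c i [MOD q i] := by
  obtain ⟨z, hz⟩ := chineseRemainderOfFinset (fun i => c i + (q i - 1) * d i) q Finset.univ
    (fun i _ => hq i) (fun i _ j _ hij => hcop hij)
  refine ⟨z, fun i => ?_⟩
  have hshift : c i + (q i - 1) * d i + d i = c i + d i * q i := by
    obtain ⟨p, hp⟩ := exists_eq_add_one_of_ne_zero (hq i)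
    rw [hp, Nat.add_sub_cancel]
    ring
  calc z + d i ≡ c i + (q i - 1) * d i + d i [MOD q i] := (hz i (Finset.mem_univ i)).add_right _
    _ = c i + d i * q i := hshift
    _ ≡ c i [MOD q i] := by simp [ModEq, add_mul_mod_self_right]

theorem exists_eq_mul_one_add_mul_of_modEq {m c n : ℕ} (hcm : c ≤ m) (h : m ≡ c [MOD c * n]) :
    ∃ s, m = c * (1 + n * s) := by
  obtain ⟨s, hs⟩ := (modEq_iff_dvd' hcm).mp h.symm
  exact ⟨s, by rw [mul_add, mul_one, ← mul_assoc, ← hs]; omega⟩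

theorem coprime_mul_pow_mul_pow {b b' n n' : ℕ} (e e' : ℕ) (hbb : Coprime b b')
    (hbn : Coprime b n') (hnb : Coprime n b') (hnn : Coprime n n') :
    Coprime (b * n ^ e) (b' * n' ^ e') :=
  Coprime.mul_left (hbb.mul_right (hbn.pow_right _)) ((hnb.mul_right (hnn.pow_right _)).pow_left _)

end Nat

theorem crt_dichotomy_general (h k : ℕ) (hk : 0 < k)
    (A : Set ℕ)
    (B H : Finset ℕ) (u : ℕ)
    (hBpos : ∀ b ∈ B, 0 < b) (hBcard : B.card = h)
    (hBcop : ∀ a ∈ B, ∀ b ∈ B, a ≠ b → Nat.Coprime a b)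
    (hBA : ∀ b ∈ B, u * b ∈ A)
    (hHpos : ∀ a ∈ H, 0 < a) (hHcard : H.card = B.card)
    (hHcop : ∀ a ∈ H, ∀ b ∈ H, a ≠ b → Nat.Coprime a b)
    (hHB : ∀ a ∈ H, ∀ b ∈ B, Nat.Coprime a b) :
    (∃ x r n : ℕ, n ∈ H ∧ 0 < r ∧ r ≡ 1 [MOD n] ∧ x ∈ A ∧ x * n ^ k * r ∈ A) ∨
    (∃ z' : ℕ, ∀ t : ℕ, 0 < t →
      ∀ m ∈ Set.Icc (z' + t * ((∏ x ∈ B, x ^ 2) * ∏ x ∈ H, x ^ (2 * k)))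
          (z' + t * ((∏ x ∈ B, x ^ 2) * ∏ x ∈ H, x ^ (2 * k)) + h - 1),
        u * m ∉ A) := by
  refine or_iff_not_imp_left.mpr fun hL => ?_
  set b := B.orderEmbOfFin hBcard
  set n := H.orderEmbOfFin (hHcard.trans hBcard)
  have hbB i : b i ∈ B := B.orderEmbOfFin_mem hBcard i
  have hnH i : n i ∈ H := H.orderEmbOfFin_mem _ i
  set M := (∏ x ∈ B, x ^ 2) * ∏ x ∈ H, x ^ (2 * k)
  have hMpos : 0 < M := Nat.mul_pos (Finset.prod_pos fun x hx => pow_pos (hBpos x hx) _)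
    (Finset.prod_pos fun x hx => pow_pos (hHpos x hx) _)
  have hqM i : b i * n i ^ k * n i ∣ M := by
    rw [mul_assoc, ← pow_succ]
    exact Nat.mul_dvd_mul ((dvd_pow_self _ two_ne_zero).trans (Finset.dvd_prod_of_mem _ (hbB i)))
      ((pow_dvd_pow _ (by omega)).trans (Finset.dvd_prod_of_mem _ (hnH i)))
  obtain ⟨z, hz⟩ := Nat.exists_add_modEq_of_pairwise_coprime (fun i => b i * n i ^ k * n i)
    (fun i => b i * n i ^ k) (fun i : Fin h => (i : ℕ))
    (fun i => (Nat.pos_of_dvd_of_pos (hqM i) hMpos).ne')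
    (fun i j hij => by
      simpa only [mul_assoc, ← pow_succ] using Nat.coprime_mul_pow_mul_pow _ _
        (hBcop _ (hbB i) _ (hbB j) (b.injective.ne hij)) (hHB _ (hnH j) _ (hbB i)).symm
        (hHB _ (hnH i) _ (hbB j)) (hHcop _ (hnH i) _ (hnH j) (n.injective.ne hij)))
  refine ⟨z, fun t ht m ⟨hm₁, hm₂⟩ hmA => hL ?_⟩
  have htM : 0 < t * M := Nat.mul_pos ht hMpos
  obtain ⟨j, rfl⟩ : ∃ j : Fin h, m = z + t * M + j :=
    ⟨⟨m - (z + t * M), by omega⟩, by simp only; omega⟩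
  have hmod : z + t * M + j ≡ b j * n j ^ k [MOD b j * n j ^ k * n j] := by
    obtain ⟨d, hd⟩ := hqM j
    calc z + t * M + j = z + j + b j * n j ^ k * n j * (d * t) := by rw [hd]; ring
      _ ≡ z + j [MOD b j * n j ^ k * n j] := by simp [Nat.ModEq, Nat.add_mul_mod_self_left]
      _ ≡ b j * n j ^ k [MOD b j * n j ^ k * n j] := hz j
  have hcm : b j * n j ^ k ≤ z + t * M + j :=
    calc b j * n j ^ k ≤ b j * n j ^ k * n j := Nat.le_mul_of_pos_right _ (hHpos _ (hnH j))
      _ ≤ M := Nat.le_of_dvd hMpos (hqM j)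
      _ ≤ z + t * M + j := by nlinarith
  obtain ⟨s, hs⟩ := Nat.exists_eq_mul_one_add_mul_of_modEq hcm hmod
  refine ⟨u * b j, 1 + n j * s, n j, hnH j, by positivity, ?_, hBA _ (hbB j), ?_⟩
  · simp [Nat.ModEq, Nat.add_mul_mod_self_left]
  · rw [hs] at hmA
    convert hmA using 1
    ring

/-- the dichotomy obtained from the CRT lemma. -/
theorem crt_dichotomy (h k : ℕ) (hh : 0 < h) (hk : 0 < k)
    (A : Set ℕ) (hAinf : A.Infinite)
    (B H : Finset ℕ) (u : ℕ) (hu : 0 < u)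
    (hBpos : ∀ b ∈ B, 0 < b) (hBcard : B.card = h)
    (hBcop : ∀ a ∈ B, ∀ b ∈ B, a ≠ b → Nat.Coprime a b)
    (hBA : ∀ b ∈ B, u * b ∈ A)
    (hHpos : ∀ a ∈ H, 0 < a) (hHcard : H.card = B.card)
    (hHcop : ∀ a ∈ H, ∀ b ∈ H, a ≠ b → Nat.Coprime a b)
    (hHB : ∀ a ∈ H, ∀ b ∈ B, Nat.Coprime a b) :
    (∃ x r n : ℕ, n ∈ H ∧ 0 < r ∧ r ≡ 1 [MOD n] ∧ x ∈ A ∧ x * n ^ k * r ∈ A) ∨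
    (∃ z' : ℕ, ∀ t : ℕ, 0 < t →
      ∀ m ∈ Set.Icc (z' + t * ((∏ x ∈ B, x ^ 2) * ∏ x ∈ H, x ^ (2 * k)))
          (z' + t * ((∏ x ∈ B, x ^ 2) * ∏ x ∈ H, x ^ (2 * k)) + h - 1),
        u * m ∉ A) :=
  crt_dichotomy_general h k hk A B H u hBpos hBcard hBcop hBA hHpos hHcard hHcop hHB
end

section
/- Let k, l ∈ ℕ, let H_0 be an infinite pairwise prime subset of ℕ, and let A be an l-syndetic set. If B is a pairwise prime subset of A with |B| ≥ l (and B finite), then there exist x, r ∈ ℕ and n ∈ H_0 with r ≡ 1 (mod n), x ∈ A and x·n^k·r ∈ A. -/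
/-- A pairwise prime subset of the positive integers. -/
def PairwisePrimeSet (B : Set ℕ) : Prop :=
  (∀ x ∈ B, 0 < x) ∧ ∀ a ∈ B, ∀ b ∈ B, a ≠ b → Nat.Coprime a b

/-! Choose `l` elements `bᵢ` of `B` and `l` distinct elements `nᵢ` of `H₀` coprime to every
element of `B`; this is possible since each prime factor of `∏ B` divides at most one element of
`H₀`. The moduli `bᵢ nᵢ^(k+1)` are then pairwise coprime, so by the Chinese remainder theorem
there is an arbitrarily large `s` with `s + i ≡ bᵢ nᵢ^k (mod bᵢ nᵢ^(k+1))` for every `i < l`.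
Syndeticity puts some `s + i` into `A`, and `s + i = bᵢ nᵢ^k (1 + nᵢ t)`. -/

theorem Nat.exists_ge_forall_modEq {ι : Type*} (t : Finset ι) (a M : ι → ℕ)
    (hM : ∀ i ∈ t, M i ≠ 0) (hcop : (t : Set ι).Pairwise fun i j => Nat.Coprime (M i) (M j))
    (N : ℕ) : ∃ s, N ≤ s ∧ ∀ i ∈ t, s ≡ a i [MOD M i] := by
  obtain ⟨k, hk⟩ := Nat.chineseRemainderOfFinset a M t hM hcop
  have hprod : 0 < ∏ i ∈ t, M i := Finset.prod_pos fun i hi => Nat.pos_of_ne_zero (hM i hi)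
  refine ⟨k + N * ∏ i ∈ t, M i, by nlinarith, fun i hi => ?_⟩
  calc k + N * ∏ i ∈ t, M i ≡ k + 0 [MOD M i] :=
        .add_left _ (Nat.modEq_zero_iff_dvd.2 (dvd_mul_of_dvd_right (t.dvd_prod_of_mem M hi) N))
    _ ≡ a i [MOD M i] := hk i hi

theorem SyndeticWith.exists_modEq {A : Set ℕ} {l : ℕ} (hA : SyndeticWith A l)
    (c M : Fin l → ℕ) (hM : ∀ i, M i ≠ 0)
    (hcop : Pairwise fun i j => Nat.Coprime (M i) (M j)) :
    ∃ i, ∃ a ∈ A, c i ≤ a ∧ a ≡ c i [MOD M i] := by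
  -- `s + i ≡ c i` amounts to `s ≡ c i - i ≡ c i + i * (M i - 1)`
  obtain ⟨s, hs, hsmod⟩ := Nat.exists_ge_forall_modEq Finset.univ
    (fun i => c i + i * (M i - 1)) M (fun i _ => hM i) (fun i _ j _ hij => hcop hij)
    (∑ i, c i + 1)
  obtain ⟨a, haA, hsa, has⟩ := hA s (by omega)
  set i : Fin l := ⟨a - s, by omega⟩
  have hcs : c i ≤ s :=
    (Finset.single_le_sum (fun j _ => Nat.zero_le (c j)) (Finset.mem_univ i)).trans (by omega)
  refine ⟨i, a, haA, by omega, ?_⟩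
  calc a = s + i := by simp [i]; omega
    _ ≡ c i + i * (M i - 1) + i [MOD M i] := (hsmod i (Finset.mem_univ i)).add_right _
    _ = c i + i * M i := by
      rw [add_assoc, ← Nat.mul_add_one, Nat.sub_add_cancel (Nat.one_le_iff_ne_zero.2 (hM i))]
    _ ≡ c i [MOD M i] := (Nat.modEq_add_mul_modulus_iff.2 rfl).symm

theorem Nat.exists_eq_mul_of_modEq {a c n : ℕ} (hca : c ≤ a) (h : a ≡ c [MOD c * n]) :
    ∃ r, 0 < r ∧ r ≡ 1 [MOD n] ∧ a = c * r := by
  obtain ⟨t, ht⟩ := (Nat.modEq_iff_dvd' hca).1 h.symm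
  exact ⟨1 + n * t, by omega, by simp [Nat.ModEq, Nat.add_mul_mod_self_left],
    by rw [mul_add, ← mul_assoc]; omega⟩

theorem Nat.pairwise_coprime_mul_pow {ι : Type*} {b n : ι → ℕ}
    (hb : Pairwise fun i j => Nat.Coprime (b i) (b j))
    (hn : Pairwise fun i j => Nat.Coprime (n i) (n j)) (hnb : ∀ i j, Nat.Coprime (n i) (b j))
    (m : ℕ) : Pairwise fun i j => Nat.Coprime (b i * n i ^ m) (b j * n j ^ m) :=
  fun i j hij => ((hb hij).mul_right ((hnb j i).symm.pow_right m)).mul_left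
    (((hnb i j).pow_left m).mul_right ((hn hij).pow m m))

theorem Set.Infinite.sep_coprime {H : Set ℕ} (hH : H.Infinite) (hcop : H.Pairwise Nat.Coprime)
    {P : ℕ} (hP : P ≠ 0) : {h ∈ H | Nat.Coprime h P}.Infinite := by
  -- distinct members of `H` have coprime, hence distinct nontrivial, gcds with `P`
  have hfin : {h ∈ H | ¬ Nat.Coprime h P}.Finite := by
    refine Set.Finite.of_finite_image (f := fun h => Nat.gcd h P)
      ((P.divisors.finite_toSet).subset ?_) ?_
    · rintro _ ⟨h, -, rfl⟩
      exact Nat.mem_divisors.2 ⟨Nat.gcd_dvd_right h P, hP⟩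
    · intro x hx y hy (hxy : x.gcd P = y.gcd P)
      by_contra hne
      have : Nat.gcd x P ∣ Nat.gcd x y :=
        Nat.dvd_gcd (Nat.gcd_dvd_left x P) (hxy ▸ Nat.gcd_dvd_left y P)
      exact hx.2 (Nat.eq_one_of_dvd_one (hcop hx.1 hy.1 hne ▸ this))
  exact (hH.sdiff hfin).mono fun h hh => ⟨hh.1, by_contra fun hc => hh.2 ⟨hh.1, hc⟩⟩

theorem syndetic_with_large_pairwise_prime_subset_general (k l : ℕ)
    (H0 : Set ℕ) (hH0inf : H0.Infinite) (hH0 : PairwisePrimeSet H0)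
    (A : Set ℕ) (hA : SyndeticWith A l) (B : Finset ℕ)
    (hBA : ↑B ⊆ A) (hBcard : l ≤ B.card) (hBpos : ∀ b ∈ B, 0 < b)
    (hBcop : ∀ a ∈ B, ∀ b ∈ B, a ≠ b → Nat.Coprime a b) :
    ∃ x r n : ℕ, n ∈ H0 ∧ 0 < r ∧ r ≡ 1 [MOD n] ∧ x ∈ A ∧ x * n ^ k * r ∈ A := by
  have hP : ∏ b ∈ B, b ≠ 0 := Finset.prod_ne_zero_iff.2 fun b hb => (hBpos b hb).ne'
  have hS := hH0inf.sep_coprime hH0.2 hP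
  let b : Fin l ↪ ℕ :=
    (Fin.castLEEmb hBcard).trans (B.equivFin.symm.toEmbedding.trans (.subtype _))
  let n : Fin l ↪ ℕ := Fin.valEmbedding.trans ((hS.natEmbedding _).trans (.subtype _))
  have hbB : ∀ i, b i ∈ B := fun i => (B.equivFin.symm _).2
  have hnH : ∀ i, n i ∈ H0 := fun i => (hS.natEmbedding _ i).2.1
  have hnb : ∀ i j, Nat.Coprime (n i) (b j) := fun i j =>
    (hS.natEmbedding _ i).2.2.coprime_dvd_right (B.dvd_prod_of_mem (fun x => x) (hbB j))
  have hb : Pairwise fun i j => Nat.Coprime (b i) (b j) := fun i j hij =>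
    hBcop _ (hbB i) _ (hbB j) fun h => hij (b.injective h)
  have hn : Pairwise fun i j => Nat.Coprime (n i) (n j) := fun i j hij =>
    hH0.2 _ (hnH i) _ (hnH j) fun h => hij (n.injective h)
  obtain ⟨i, a, haA, hle, hmod⟩ := hA.exists_modEq (fun i => b i * n i ^ k)
    (fun i => b i * n i ^ (k + 1))
    (fun i => by have := hBpos _ (hbB i); have := hH0.1 _ (hnH i); positivity)
    (Nat.pairwise_coprime_mul_pow hb hn hnb (k + 1))
  rw [pow_succ, ← mul_assoc] at hmod
  obtain ⟨r, hr, hr1, rfl⟩ := Nat.exists_eq_mul_of_modEq hle hmod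
  exact ⟨b i, r, n i, hnH i, hr, hr1, hBA (hbB i), haA⟩

/-- an `l`-syndetic set containing a pairwise prime subset of
cardinality at least `l` contains a configuration `{x, x·n^k·r}` with `n ∈ H₀`
and `r ≡ 1 (mod n)`. -/
theorem syndetic_with_large_pairwise_prime_subset (k l : ℕ) (hk : 0 < k)
    (hl : 0 < l) (H0 : Set ℕ) (hH0inf : H0.Infinite) (hH0 : PairwisePrimeSet H0)
    (A : Set ℕ) (hA : SyndeticWith A l) (B : Finset ℕ)
    (hBA : ↑B ⊆ A) (hBcard : l ≤ B.card) (hBpos : ∀ b ∈ B, 0 < b)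
    (hBcop : ∀ a ∈ B, ∀ b ∈ B, a ≠ b → Nat.Coprime a b) :
    ∃ x r n : ℕ, n ∈ H0 ∧ 0 < r ∧ r ≡ 1 [MOD n] ∧ x ∈ A ∧ x * n ^ k * r ∈ A :=
  syndetic_with_large_pairwise_prime_subset_general k l H0 hH0inf hH0 A hA B hBA hBcard hBpos hBcop
end

section
/- Let l ∈ ℕ and let A be a (2l+1)-syndetic subset of ℕ such that |xℕ \ A| ≥ 2 for every x ∈ ℕ (i.e., for every x, at least two multiples of x lie outside A). Then there exist d ∈ [1, l] and an infinite pairwise prime set B ⊆ ℕ such that dB ⊆ A. -/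
/-- Auxiliary recursion: given a choice function `p`, build the sequence of
`(d, x, P)` where `P` is the running product of the `x`'s. -/
def auxF (p : ℕ → ℕ → ℕ × ℕ) : ℕ → ℕ × ℕ × ℕ
  | 0 => ((p 1 0).1, (p 1 0).2, (p 1 0).2)
  | n + 1 =>
    let s := auxF p n
    ((p s.2.2 s.2.1).1, (p s.2.2 s.2.1).2, s.2.2 * (p s.2.2 s.2.1).2)

/-- a `(2l+1)`-syndetic set missing at least two multiples of every
positive integer admits `d ∈ [1, l]` and an infinite pairwise prime set `B` with
`dB ⊆ A`. -/
theorem syndetic_infinite_pairwise_prime (l : ℕ) (hl : 0 < l) (A : Set ℕ)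
    (hA : SyndeticWith A (2 * l + 1))
    (hmiss : ∀ x : ℕ, 0 < x → ∃ a b : ℕ, a ≠ b ∧
      (∃ n : ℕ, 0 < n ∧ a = x * n) ∧ a ∉ A ∧
      (∃ n : ℕ, 0 < n ∧ b = x * n) ∧ b ∉ A) :
    ∃ d : ℕ, 1 ≤ d ∧ d ≤ l ∧ ∃ B : Set ℕ, B.Infinite ∧ PairwisePrimeSet B ∧
      ∀ x ∈ B, d * x ∈ A := by
  classical
  -- Key lemma: for any positive modulus m and bound M there are d ∈ [1,l] and
  -- x > M coprime to m with d*x ∈ A.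
  have key : ∀ m M : ℕ, 0 < m → ∃ q : ℕ × ℕ,
      1 ≤ q.1 ∧ q.1 ≤ l ∧ M < q.2 ∧ Nat.Coprime q.2 m ∧ q.1 * q.2 ∈ A := by
    intro m M hm
    have hfac : 0 < l.factorial := Nat.factorial_pos l
    set K := m * m * l.factorial with hK
    have hK0 : 0 < K := Nat.mul_pos (Nat.mul_pos hm hm) hfac
    set M' := l * (M + 2) + l + 1 with hM'
    have hlM : l ≤ l * (M + 2) := Nat.le_mul_of_pos_right l (by omega)
    obtain ⟨a, b, hab, ⟨n1, hn1, ha1⟩, haA, _⟩ :=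
      hmiss (K * (M' + 1)) (Nat.mul_pos hK0 (by omega))
    set t := (M' + 1) * n1 with ht
    have ha : a = K * t := by rw [ha1]; ring
    have haM : M' + 1 ≤ a := by
      rw [ha1]
      calc M' + 1 ≤ K * (M' + 1) := Nat.le_mul_of_pos_left _ hK0
        _ ≤ K * (M' + 1) * n1 := Nat.le_mul_of_pos_right _ hn1
    -- helper: for any d ∈ [1,l], a = d * q with m ∣ q and q ≥ M+2
    have helper : ∀ d : ℕ, 1 ≤ d → d ≤ l → ∃ q, a = d * q ∧ m ∣ q ∧ M + 2 ≤ q := by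
      intro d hd1 hdl
      obtain ⟨f, hf⟩ := Nat.dvd_factorial (by omega) hdl
      refine ⟨m * (m * (f * t)), ?_, ⟨m * (f * t), rfl⟩, ?_⟩
      · rw [ha, hK, hf]; ring
      · have h1 : d * (m * (m * (f * t))) ≤ l * (m * (m * (f * t))) :=
          Nat.mul_le_mul_right _ hdl
        have h2 : a = d * (m * (m * (f * t))) := by rw [ha, hK, hf]; ring
        have h3 : l * (M + 2) ≤ l * (m * (m * (f * t))) := by omega
        exact Nat.le_of_mul_le_mul_left h3 hl
    -- syndeticity near a
    obtain ⟨c, hcA, hc1, hc2⟩ := hA (a - l) (by omega)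
    have hca : c ≠ a := fun h => haA (h ▸ hcA)
    rcases lt_or_gt_of_ne hca with hlt | hgt
    · -- c < a, d = a - c
      have hd1 : 1 ≤ a - c := by omega
      have hdl : a - c ≤ l := by omega
      obtain ⟨q, haq, hmq, hq2⟩ := helper (a - c) hd1 hdl
      refine ⟨(a - c, q - 1), hd1, hdl, by omega, ?_, ?_⟩
      · have gq : Nat.gcd (q - 1) m ∣ q := (Nat.gcd_dvd_right _ m).trans hmq
        have gx : Nat.gcd (q - 1) m ∣ q - 1 := Nat.gcd_dvd_left _ m
        have h1 : Nat.gcd (q - 1) m ∣ q - (q - 1) := Nat.dvd_sub gq gx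
        rw [show q - (q - 1) = 1 by omega] at h1
        exact Nat.dvd_one.mp h1
      · have e1 : (a - c) * (q - 1) + (a - c) = (a - c) * q := by
          have hq1 : q - 1 + 1 = q := by omega
          calc (a - c) * (q - 1) + (a - c) = (a - c) * ((q - 1) + 1) := by ring
            _ = (a - c) * q := by rw [hq1]
        have : c = (a - c) * (q - 1) := by omega
        simpa [← this] using hcA
    · -- c > a, d = c - a
      have hd1 : 1 ≤ c - a := by omega
      have hdl : c - a ≤ l := by omega
      obtain ⟨q, haq, hmq, hq2⟩ := helper (c - a) hd1 hdl
      refine ⟨(c - a, q + 1), hd1, hdl, by omega, ?_, ?_⟩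
      · have gq : Nat.gcd (q + 1) m ∣ q := (Nat.gcd_dvd_right _ m).trans hmq
        have gx : Nat.gcd (q + 1) m ∣ q + 1 := Nat.gcd_dvd_left _ m
        have h1 : Nat.gcd (q + 1) m ∣ q + 1 - q := Nat.dvd_sub gx gq
        rw [show q + 1 - q = 1 by omega] at h1
        exact Nat.dvd_one.mp h1
      · have e1 : (c - a) * (q + 1) = (c - a) * q + (c - a) := by ring
        have : c = (c - a) * (q + 1) := by omega
        simpa [← this] using hcA
  -- turn key into a choice function (total, with guarded spec)
  have key' : ∀ m M : ℕ, ∃ q : ℕ × ℕ, 0 < m →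
      1 ≤ q.1 ∧ q.1 ≤ l ∧ M < q.2 ∧ Nat.Coprime q.2 m ∧ q.1 * q.2 ∈ A := by
    intro m M
    rcases Nat.eq_zero_or_pos m with h | h
    · exact ⟨(0, 0), fun hc => by omega⟩
    · obtain ⟨q, hq⟩ := key m M h; exact ⟨q, fun _ => hq⟩
  choose p hp using key'
  have h0 := hp 1 0 one_pos
  -- invariants of the recursion
  have hInv : ∀ n, 0 < (auxF p n).2.2 ∧ ∀ i, i ≤ n → (auxF p i).2.1 ∣ (auxF p n).2.2 := by
    intro n
    induction n with
    | zero =>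
      constructor
      · simpa [auxF] using h0.2.2.1
      · intro i hi
        have : i = 0 := by omega
        subst this; simp [auxF]
    | succ n ih =>
      have hstep := hp (auxF p n).2.2 (auxF p n).2.1 ih.1
      have hx : 0 < (p (auxF p n).2.2 (auxF p n).2.1).2 := by omega
      constructor
      · show 0 < (auxF p n).2.2 * (p (auxF p n).2.2 (auxF p n).2.1).2
        exact Nat.mul_pos ih.1 hx
      · intro i hi
        rcases Nat.lt_or_ge i (n + 1) with h | h
        · exact (ih.2 i (by omega)).mul_right _
        · have : i = n + 1 := by omega
          subst this
          show (p (auxF p n).2.2 (auxF p n).2.1).2 ∣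
            (auxF p n).2.2 * (p (auxF p n).2.2 (auxF p n).2.1).2
          exact dvd_mul_left _ _
  -- step properties
  have hS : ∀ n, 1 ≤ (auxF p (n+1)).1 ∧ (auxF p (n+1)).1 ≤ l ∧
      (auxF p n).2.1 < (auxF p (n+1)).2.1 ∧
      Nat.Coprime (auxF p (n+1)).2.1 (auxF p n).2.2 ∧
      (auxF p (n+1)).1 * (auxF p (n+1)).2.1 ∈ A := by
    intro n
    have hstep := hp (auxF p n).2.2 (auxF p n).2.1 (hInv n).1
    exact ⟨hstep.1, hstep.2.1, hstep.2.2.1, hstep.2.2.2.1, hstep.2.2.2.2⟩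
  have hd1 : ∀ n, 1 ≤ (auxF p n).1 := by
    intro n; cases n with
    | zero => simpa [auxF] using h0.1
    | succ n => exact (hS n).1
  have hdl : ∀ n, (auxF p n).1 ≤ l := by
    intro n; cases n with
    | zero => simpa [auxF] using h0.2.1
    | succ n => exact (hS n).2.1
  have hdA : ∀ n, (auxF p n).1 * (auxF p n).2.1 ∈ A := by
    intro n; cases n with
    | zero => simpa [auxF] using h0.2.2.2.2
    | succ n => exact (hS n).2.2.2.2
  have hsm : StrictMono (fun n => (auxF p n).2.1) :=
    strictMono_nat_of_lt_succ (fun n => (hS n).2.2.1)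
  have hXpos : ∀ n, 0 < (auxF p n).2.1 := by
    intro n
    have h00 : 0 < (auxF p 0).2.1 := by simpa [auxF] using h0.2.2.1
    exact lt_of_lt_of_le h00 (hsm.monotone (Nat.zero_le n))
  have hcop2 : ∀ i j, i < j → Nat.Coprime ((auxF p j).2.1) ((auxF p i).2.1) := by
    intro i j hij
    obtain ⟨k, rfl⟩ : ∃ k, j = k + 1 := ⟨j - 1, by omega⟩
    exact Nat.Coprime.coprime_dvd_right ((hInv k).2 i (by omega)) (hS k).2.2.2.1
  -- pigeonhole on d
  let g : ℕ → Fin (l + 1) := fun n => ⟨(auxF p n).1, by have := hdl n; omega⟩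
  obtain ⟨y, hy⟩ := Finite.exists_infinite_fiber g
  have hyInf : (g ⁻¹' {y}).Infinite := Set.infinite_coe_iff.mp hy
  have hmem : ∀ n ∈ g ⁻¹' {y}, (auxF p n).1 = (y : ℕ) := by
    intro n hn
    have : g n = y := hn
    exact congrArg Fin.val this
  obtain ⟨n₀, hn₀⟩ := hyInf.nonempty
  refine ⟨(y : ℕ), ?_, ?_, (fun n => (auxF p n).2.1) '' (g ⁻¹' {y}), ?_, ⟨?_, ?_⟩, ?_⟩
  · rw [← hmem n₀ hn₀]; exact hd1 n₀
  · rw [← hmem n₀ hn₀]; exact hdl n₀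
  · exact hyInf.image (hsm.injective.injOn)
  · rintro x ⟨n, -, rfl⟩; exact hXpos n
  · rintro a ⟨i, -, rfl⟩ b ⟨j, -, rfl⟩ hab
    have hij : i ≠ j := fun h => hab (by rw [h])
    rcases lt_or_gt_of_ne hij with h | h
    · exact (hcop2 i j h).symm
    · exact hcop2 j i h
  · rintro x ⟨n, hn, rfl⟩
    rw [← hmem n hn]
    exact hdA n
end

section
/- Let k, l ∈ ℕ, let H_0 be an infinite pairwise prime subset of ℕ, and let A be a (2l+1)-syndetic set such that there do NOT exist x, r ∈ ℕ and n ∈ H_0 with r ≡ 1 (mod n), x ∈ A and x·n^k·r ∈ A. Then there exists d ∈ [2, l] such that for every h ∈ ℕ, ({d}, h, l) is an A-Triveni triplet. -/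
/-- `r(p,l)`: the largest `t` with `p ^ t ≤ 2 * l + 1`. -/
def rpl (p l : ℕ) : ℕ := Nat.findGreatest (fun t => p ^ t ≤ 2 * l + 1) (2 * l + 1)

/-- `T(l)`: products `∏_{p prime, p ≤ 2l+1} p ^ (r_p)` with `0 ≤ r_p ≤ r(p,l)`. -/
def Tset (l : ℕ) : Set ℕ :=
  {m | ∃ r : ℕ → ℕ, (∀ p, r p ≤ rpl p l) ∧
    m = ∏ p ∈ (Finset.range (2 * l + 2)).filter Nat.Prime, p ^ r p}

/-- `(F, h, l)` is a Triveni triplet with respect to `A`. -/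
def TriveniTriplet (A F : Set ℕ) (h l : ℕ) : Prop :=
  F ⊆ Tset l \ {1} ∧
  ∃ B : ℕ → Set ℕ,
    (∀ u ∈ F, PairwisePrimeSet (B u) ∧ (B u).ncard = h ∧ ∀ x ∈ B u, u * x ∈ A) ∧
    (∀ u ∈ F, ∀ v ∈ F, u ≠ v → ∀ x ∈ B u, ∀ y ∈ B v, Nat.Coprime x y)

/-!
For every `P > 0` some `b ≥ 2` coprime to `P` has a multiple `d * b ∈ A` with `2 ≤ d ≤ l`.
Iterating, with `P` the product of the `b` found so far, gives an infinite pairwise coprime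
family of such `b`, and a single `d` serves infinitely many of them.

To find `b`, take a large `c` divisible by `l! * P` with `c - 1, c, c + 1 ∉ A`: syndeticity puts
some `c ± e` in `A` with `2 ≤ e ≤ l`, and `b = c / e ± 1` works. Every `c ≡ x n^k (mod x n^(k+1))`
with `x ∈ A`, `n ∈ H₀` lies outside `A`, so by the Chinese remainder theorem it suffices to find
three such pairs `(x, n)` whose moduli are coprime to each other and to `l! * P`. If no `b`
existed, `A` would contain elements coprime to any given `N` (the neighbours in `A` of a large
multiple of `N` outside `A`), which supplies these pairs.
-/

open Nat

lemma coprime_succ_of_dvd {P q : ℕ} (h : P ∣ q) : Coprime (q + 1) P :=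
  (Nat.coprime_self_add_left.mpr (Nat.coprime_one_left q)).coprime_dvd_right h

lemma coprime_pred_of_dvd {P q : ℕ} (h : P ∣ q) (hq : 0 < q) : Coprime (q - 1) P := by
  have hcop : Coprime (q - 1) (q - 1 + 1) :=
    Nat.coprime_self_add_right.mpr (Nat.coprime_one_right _)
  rw [Nat.sub_add_cancel hq] at hcop
  exact hcop.coprime_dvd_right h

lemma exists_gt_modEq_and_modEq {m n : ℕ} (hmn : Coprime m n) (hm : 0 < m) (hn : 0 < n)
    (a b B : ℕ) : ∃ c, B < c ∧ c ≡ a [MOD m] ∧ c ≡ b [MOD n] := by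
  obtain ⟨c, ha, hb⟩ := Nat.chineseRemainder hmn a b
  refine ⟨c + m * n * (B + 1), by nlinarith [Nat.mul_pos hm hn], ?_, ?_⟩
  · calc c + m * n * (B + 1) = c + m * (n * (B + 1)) := by ring
      _ ≡ c [MOD m] := Nat.add_mul_mod_self_left _ _ _
      _ ≡ a [MOD m] := ha
  · calc c + m * n * (B + 1) = c + n * (m * (B + 1)) := by ring
      _ ≡ c [MOD n] := Nat.add_mul_mod_self_left _ _ _
      _ ≡ b [MOD n] := hb

lemma PairwisePrimeSet.exists_coprime {H : Set ℕ} (hH : PairwisePrimeSet H) (hinf : H.Infinite)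
    {N : ℕ} (hN : 0 < N) : ∃ n ∈ H, 2 ≤ n ∧ Coprime n N := by
  have hbad : {n ∈ H | ¬Coprime n N}.Finite := by
    refine (N.primeFactors.finite_toSet.biUnion (t := fun p => {n ∈ H | p ∣ n})
      fun p hp => Set.Subsingleton.finite ?_).subset ?_
    · rintro a ⟨ha, hpa⟩ b ⟨hb, hpb⟩
      by_contra hab
      exact (Nat.prime_of_mem_primeFactors hp).not_dvd_one
        (hH.2 a ha b hb hab ▸ Nat.dvd_gcd hpa hpb)
    · rintro n ⟨hn, hcop⟩
      obtain ⟨p, hp, hpn, hpN⟩ := Nat.Prime.not_coprime_iff_dvd.mp hcop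
      exact Set.mem_biUnion (Nat.mem_primeFactors.mpr ⟨hp, hpN, hN.ne'⟩) ⟨hn, hpn⟩
  obtain ⟨n, ⟨hn, hcop⟩, hn1⟩ := ((hinf.sdiff hbad).sdiff (Set.finite_le_nat 1)).nonempty
  exact ⟨n, hn, by simp at hn1; omega, by_contra fun h => hcop ⟨hn, h⟩⟩

lemma mem_Tset_of_le {l d : ℕ} (hd : 0 < d) (hdl : d ≤ 2 * l + 1) : d ∈ Tset l := by
  refine ⟨d.factorization, fun p => ?_, ?_⟩
  · by_cases hp : p.Prime
    · have hpow : p ^ d.factorization p ≤ d := Nat.ordProj_le p hd.ne'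
      have hexp : d.factorization p < p ^ d.factorization p := Nat.lt_pow_self hp.one_lt
      exact Nat.le_findGreatest (by omega) (by omega)
    · simp [Nat.factorization_eq_zero_of_not_prime d hp]
  · conv_lhs => rw [← Nat.prod_factorization_pow_eq_self hd.ne']
    refine Finsupp.prod_of_support_subset _ (fun p hp => ?_) _ (fun _ _ => pow_zero _)
    rw [Nat.support_factorization] at hp
    have := Nat.le_of_mem_primeFactors hp
    simp only [Finset.mem_filter, Finset.mem_range]
    exact ⟨by omega, Nat.prime_of_mem_primeFactors hp⟩

lemma triveniTriplet_singleton {A B : Set ℕ} {d h l : ℕ} (hd : 2 ≤ d) (hdl : d ≤ 2 * l + 1)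
    (hB : PairwisePrimeSet B) (hcard : B.ncard = h) (hBA : ∀ x ∈ B, d * x ∈ A) :
    TriveniTriplet A {d} h l := by
  refine ⟨?_, fun _ => B, ?_, ?_⟩
  · rintro u rfl
    exact ⟨mem_Tset_of_le (by omega) hdl, by simp only [Set.mem_singleton_iff]; omega⟩
  · rintro u rfl
    exact ⟨hB, hcard, hBA⟩
  · rintro u rfl v rfl huv
    exact absurd rfl huv

def HasSmallMultipleIn (A : Set ℕ) (l b : ℕ) : Prop :=
  ∃ d, 2 ≤ d ∧ d ≤ l ∧ d * b ∈ A

lemma exists_infinite_pairwise_coprime {p : ℕ → Prop}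
    (h : ∀ P, 0 < P → ∃ b, 2 ≤ b ∧ Coprime b P ∧ p b) :
    ∃ S : Set ℕ, S.Infinite ∧ S.Pairwise Coprime ∧ ∀ b ∈ S, 2 ≤ b ∧ p b := by
  choose! f hf2 hfP hfp using h
  let P : ℕ → ℕ := fun i => Nat.rec 1 (fun _ Pi => Pi * f Pi) i
  have hPpos : ∀ i, 0 < P i := by
    intro i
    induction i with
    | zero => exact one_pos
    | succ i ih => exact Nat.mul_pos ih (by linarith [hf2 _ ih])
  have hdvd : ∀ i j, i < j → f (P i) ∣ P j := by
    intro i j hij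
    induction j, hij using Nat.le_induction with
    | base => exact dvd_mul_left _ _
    | succ j _ ih => exact ih.mul_right _
  have hcop : ∀ i j, i < j → Coprime (f (P j)) (f (P i)) := fun i j hij =>
    (hfP _ (hPpos j)).coprime_dvd_right (hdvd i j hij)
  have hne : ∀ i j, i < j → f (P i) ≠ f (P j) := fun i j hij heq => by
    have h1 : f (P j) = 1 := (Nat.coprime_self _).mp (heq ▸ hcop i j hij)
    have h2 := hf2 _ (hPpos j)
    omega
  have hinj : Function.Injective (fun i => f (P i)) := fun i j hij => by
    by_contra hij'
    rcases Nat.lt_or_gt_of_ne hij' with hlt | hlt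
    exacts [hne i j hlt hij, hne j i hlt hij.symm]
  refine ⟨Set.range fun i => f (P i), Set.infinite_range_of_injective hinj, ?_, ?_⟩
  · rintro _ ⟨i, rfl⟩ _ ⟨j, rfl⟩ hne
    rcases Nat.lt_or_gt_of_ne (fun hij : i = j => hne (by rw [hij])) with hlt | hlt
    exacts [(hcop i j hlt).symm, hcop j i hlt]
  · rintro _ ⟨i, rfl⟩
    exact ⟨hf2 _ (hPpos i), hfp _ (hPpos i)⟩

lemma exists_infinite_mul_mem {A S : Set ℕ} {l : ℕ} (hS : S.Infinite)
    (h : ∀ b ∈ S, HasSmallMultipleIn A l b) :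
    ∃ d, 2 ≤ d ∧ d ≤ l ∧ {b ∈ S | d * b ∈ A}.Infinite := by
  by_contra! hfin
  refine hS (((Set.finite_Icc 2 l).biUnion fun d hd => hfin d hd.1 hd.2).subset fun b hb => ?_)
  obtain ⟨d, hd2, hdl, hdb⟩ := h b hb
  exact Set.mem_biUnion ⟨hd2, hdl⟩ ⟨hb, hdb⟩

section

variable {A H0 : Set ℕ} {k l P : ℕ}

lemma notMem_of_modEq
    (hnot : ¬∃ x r n : ℕ, n ∈ H0 ∧ 0 < r ∧ r ≡ 1 [MOD n] ∧ x ∈ A ∧ x * n ^ k * r ∈ A)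
    {x n c : ℕ} (hx : x ∈ A) (hx0 : 0 < x) (hn : n ∈ H0) (hn2 : 2 ≤ n)
    (hc : c ≡ x * n ^ k [MOD x * n ^ (k + 1)]) : c ∉ A := by
  intro hcA
  have hlt : x * n ^ k < x * n ^ (k + 1) :=
    Nat.mul_lt_mul_of_pos_left (Nat.pow_lt_pow_right (by omega) k.lt_succ_self) hx0
  have hmod : c % (x * n ^ (k + 1)) = x * n ^ k := Eq.trans hc (Nat.mod_eq_of_lt hlt)
  have hcq : c = x * n ^ k * (n * (c / (x * n ^ (k + 1))) + 1) := by
    conv_lhs => rw [← Nat.div_add_mod c (x * n ^ (k + 1)), hmod]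
    ring
  exact hnot ⟨x, _, n, hn, Nat.succ_pos _, by simp [Nat.ModEq], hx, hcq ▸ hcA⟩

lemma exists_coprime_hasSmallMultipleIn_of_near_mem {c e : ℕ} (hQ : l ! * P ∣ c)
    (hc : 3 * l < c) (he : 2 ≤ e) (hel : e ≤ l) (hce : c + e ∈ A ∨ c - e ∈ A) :
    ∃ b, 2 ≤ b ∧ Coprime b P ∧ HasSmallMultipleIn A l b := by
  obtain ⟨w, rfl⟩ : e * P ∣ c :=
    (Nat.mul_dvd_mul_right (Nat.dvd_factorial (by omega) hel) P).trans hQ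
  have hq : 3 ≤ P * w := by
    by_contra! h
    have : e * (P * w) ≤ e * 2 := Nat.mul_le_mul_left e (by omega)
    rw [← mul_assoc] at this
    omega
  rcases hce with hce | hce
  · refine ⟨P * w + 1, by omega, coprime_succ_of_dvd (dvd_mul_right P w), e, he, hel, ?_⟩
    rwa [mul_add, mul_one, ← mul_assoc]
  · refine ⟨P * w - 1, by omega, coprime_pred_of_dvd (dvd_mul_right P w) (by omega),
      e, he, hel, ?_⟩
    rwa [Nat.mul_sub_one, ← mul_assoc]

lemma exists_coprime_hasSmallMultipleIn_or_adjacent_mem (hA : SyndeticWith A (2 * l + 1))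
    {c : ℕ} (hQ : l ! * P ∣ c) (hc : 3 * l < c) (hcA : c ∉ A) :
    (∃ b, 2 ≤ b ∧ Coprime b P ∧ HasSmallMultipleIn A l b) ∨ c - 1 ∈ A ∨ c + 1 ∈ A := by
  obtain ⟨a, haA, hlo, hhi⟩ := hA (c - l) (by omega)
  by_cases hfar : a + 2 ≤ c ∨ c + 2 ≤ a
  · left
    rcases hfar with h | h
    · exact exists_coprime_hasSmallMultipleIn_of_near_mem hQ hc (e := c - a) (by omega)
        (by omega) (Or.inr (by rwa [Nat.sub_sub_self (by omega)]))
    · exact exists_coprime_hasSmallMultipleIn_of_near_mem hQ hc (e := a - c) (by omega)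
        (by omega) (Or.inl (by rwa [Nat.add_sub_cancel' (by omega)]))
  · right
    obtain rfl | rfl | rfl : a = c - 1 ∨ a = c ∨ a = c + 1 := by omega
    exacts [Or.inl haA, absurd haA hcA, Or.inr haA]

lemma exists_mem_coprime (hA : SyndeticWith A (2 * l + 1)) (hH0 : PairwisePrimeSet H0)
    (hH0inf : H0.Infinite)
    (hnot : ¬∃ x r n : ℕ, n ∈ H0 ∧ 0 < r ∧ r ≡ 1 [MOD n] ∧ x ∈ A ∧ x * n ^ k * r ∈ A)
    (hP : 0 < P) (hW : ¬∃ b, 2 ≤ b ∧ Coprime b P ∧ HasSmallMultipleIn A l b)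
    {N : ℕ} (hN : 0 < N) : ∃ y ∈ A, 0 < y ∧ Coprime y N := by
  obtain ⟨x, hxA, hx1, -⟩ := hA 1 one_pos
  obtain ⟨n, hn, hn2, hnQ⟩ := hH0.exists_coprime hH0inf (N := l ! * P * N) (by positivity)
  obtain ⟨r, hr, hrQ, hrn⟩ :=
    exists_gt_modEq_and_modEq hnQ.symm (by positivity) (by omega) 0 1 (3 * l + 1)
  have hcA : x * n ^ k * r ∉ A := fun h => hnot ⟨x, r, n, hn, by omega, hrn, hxA, h⟩
  have hQc : l ! * P * N ∣ x * n ^ k * r := (Nat.modEq_zero_iff_dvd.mp hrQ).mul_left _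
  have hrc : r ≤ x * n ^ k * r := Nat.le_mul_of_pos_left r (by positivity)
  rcases exists_coprime_hasSmallMultipleIn_or_adjacent_mem hA (dvd_of_mul_right_dvd hQc)
      (by omega) hcA with hb | hy | hy
  · exact absurd hb hW
  · exact ⟨_, hy, by omega, coprime_pred_of_dvd ((dvd_mul_left N _).trans hQc) (by omega)⟩
  · exact ⟨_, hy, by omega, coprime_succ_of_dvd ((dvd_mul_left N _).trans hQc)⟩

lemma exists_coprime_hasSmallMultipleIn (hA : SyndeticWith A (2 * l + 1))
    (hH0 : PairwisePrimeSet H0) (hH0inf : H0.Infinite)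
    (hnot : ¬∃ x r n : ℕ, n ∈ H0 ∧ 0 < r ∧ r ≡ 1 [MOD n] ∧ x ∈ A ∧ x * n ^ k * r ∈ A)
    (hP : 0 < P) : ∃ b, 2 ≤ b ∧ Coprime b P ∧ HasSmallMultipleIn A l b := by
  by_contra hW
  have exists_pair :
      ∀ R, 0 < R → ∃ y ∈ A, ∃ n ∈ H0, 0 < y ∧ 2 ≤ n ∧ Coprime R (y * n ^ (k + 1)) := by
    intro R hR
    obtain ⟨y, hyA, hy0, hyR⟩ := exists_mem_coprime hA hH0 hH0inf hnot hP hW hR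
    obtain ⟨n, hn, hn2, hnR⟩ := hH0.exists_coprime hH0inf hR
    exact ⟨y, hyA, n, hn, hy0, hn2, hyR.symm.mul_right (hnR.symm.pow_right _)⟩
  obtain ⟨y₀, hy₀, n₀, hn₀, hy₀0, hn₀2, hM₀⟩ := exists_pair (l ! * P) (by positivity)
  set M₀ := y₀ * n₀ ^ (k + 1)
  obtain ⟨y₁, hy₁, n₁, hn₁, hy₁0, hn₁2, hM₁⟩ := exists_pair (l ! * P * M₀) (by positivity)
  set M₁ := y₁ * n₁ ^ (k + 1)
  obtain ⟨y₂, hy₂, n₂, hn₂, hy₂0, hn₂2, hM₂⟩ := exists_pair (l ! * P * M₀ * M₁) (by positivity)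
  set M₂ := y₂ * n₂ ^ (k + 1)
  obtain ⟨c₀, -, hc₀Q, hc₀M₀⟩ :=
    exists_gt_modEq_and_modEq hM₀ (by positivity) (by positivity) 0 (y₀ * n₀ ^ k) 0
  obtain ⟨c₁, -, hc₁, hc₁M₁⟩ :=
    exists_gt_modEq_and_modEq hM₁ (by positivity) (by positivity) c₀ (y₁ * n₁ ^ k + 1) 0
  obtain ⟨c, hc, hc₂, hcM₂⟩ :=
    exists_gt_modEq_and_modEq hM₂ (by positivity) (by positivity) c₁ (y₂ * n₂ ^ k - 1) (3 * l)
  have hc₁' : c ≡ c₀ [MOD l ! * P * M₀] := (hc₂.of_mul_right _).trans hc₁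
  have hcQ : c ≡ 0 [MOD l ! * P] := (hc₁'.of_mul_right _).trans hc₀Q
  have hcM₀ : c ≡ y₀ * n₀ ^ k [MOD M₀] := (hc₁'.of_mul_left _).trans hc₀M₀
  have hcM₁ : c - 1 + 1 ≡ y₁ * n₁ ^ k + 1 [MOD M₁] :=
    Nat.sub_add_cancel (by omega : 1 ≤ c) ▸ (hc₂.of_mul_left _).trans hc₁M₁
  have hcM₂ : c + 1 ≡ y₂ * n₂ ^ k [MOD M₂] :=
    Nat.sub_add_cancel (Nat.one_le_iff_ne_zero.mpr (by positivity : y₂ * n₂ ^ k ≠ 0)) ▸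
      hcM₂.add_right 1
  rcases exists_coprime_hasSmallMultipleIn_or_adjacent_mem hA (Nat.modEq_zero_iff_dvd.mp hcQ) hc
      (notMem_of_modEq hnot hy₀ hy₀0 hn₀ hn₀2 hcM₀) with hb | hpred | hsucc
  · exact hW hb
  · exact notMem_of_modEq hnot hy₁ hy₁0 hn₁ hn₁2 (hcM₁.add_right_cancel' 1) hpred
  · exact notMem_of_modEq hnot hy₂ hy₂0 hn₂ hn₂2 hcM₂ hsucc

end

theorem exists_order_one_triveni_general (k l : ℕ)
    (H0 : Set ℕ) (hH0inf : H0.Infinite) (hH0 : PairwisePrimeSet H0)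
    (A : Set ℕ) (hA : SyndeticWith A (2 * l + 1))
    (hnot : ¬∃ x r n : ℕ, n ∈ H0 ∧ 0 < r ∧ r ≡ 1 [MOD n] ∧
      x ∈ A ∧ x * n ^ k * r ∈ A) :
    ∃ d : ℕ, 2 ≤ d ∧ d ≤ l ∧ ∀ h : ℕ, 0 < h → TriveniTriplet A {d} h l := by
  obtain ⟨S, hSinf, hScop, hS⟩ := exists_infinite_pairwise_coprime fun _ hP =>
    exists_coprime_hasSmallMultipleIn hA hH0 hH0inf hnot hP
  obtain ⟨d, hd2, hdl, hdS⟩ := exists_infinite_mul_mem hSinf fun b hb => (hS b hb).2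
  refine ⟨d, hd2, hdl, fun h _ => ?_⟩
  obtain ⟨B, hBS, -, hBcard⟩ := hdS.exists_subset_ncard_eq h
  have hB : PairwisePrimeSet B :=
    ⟨fun x hx => by linarith [(hS x (hBS hx).1).1],
      fun a ha b hb hab => hScop (hBS ha).1 (hBS hb).1 hab⟩
  exact triveniTriplet_singleton hd2 (by omega) hB hBcard fun x hx => (hBS hx).2

/-- Triveni triplets of order one exist with respect to
`(2l+1)`-syndetic sets avoiding the configurations `{x, x·n^k·r}`, `n ∈ H₀`. -/
theorem exists_order_one_triveni (k l : ℕ) (hk : 0 < k) (hl : 0 < l)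
    (H0 : Set ℕ) (hH0inf : H0.Infinite) (hH0 : PairwisePrimeSet H0)
    (A : Set ℕ) (hA : SyndeticWith A (2 * l + 1))
    (hnot : ¬∃ x r n : ℕ, n ∈ H0 ∧ 0 < r ∧ r ≡ 1 [MOD n] ∧
      x ∈ A ∧ x * n ^ k * r ∈ A) :
    ∃ d : ℕ, 2 ≤ d ∧ d ≤ l ∧ ∀ h : ℕ, 0 < h → TriveniTriplet A {d} h l :=
  exists_order_one_triveni_general k l H0 hH0inf hH0 A hA hnot
end

section
/- There exists a map m : ℕ × ℕ → ℕ such that for all h, l, n ∈ ℕ, the interval [n, n + m(h,l)] contains a set S with the following properties: (i) S = ∪_{i=1}^{h} [x_i, x_i + 2l] for some strictly increasing sequence x_1 < x_2 < ... < x_h of positive integers; (ii) gcd(a, b) ∈ T(l) for all distinct a, b ∈ S. -/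
open Finset

lemma pow_rpl_le (p l : ℕ) : p ^ rpl p l ≤ 2 * l + 1 :=
  Nat.findGreatest_spec (P := fun t => p ^ t ≤ 2 * l + 1) (Nat.zero_le _) (by simp)

lemma lt_pow_rpl_succ {p : ℕ} (l : ℕ) (hp : 2 ≤ p) : 2 * l + 1 < p ^ (rpl p l + 1) := by
  by_contra! hle
  have hlt : rpl p l + 1 < p ^ (rpl p l + 1) :=
    Nat.lt_two_pow_self.trans_le (Nat.pow_le_pow_left hp _)
  have : rpl p l + 1 ≤ rpl p l := Nat.le_findGreatest (by omega) hle
  omega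

lemma rpl_eq_zero {p l : ℕ} (hp : 2 * l + 1 < p) : rpl p l = 0 := by
  by_contra h
  have := Nat.le_self_pow h p
  have := pow_rpl_le p l
  omega

lemma mem_Tset_of_forall_not_pow_dvd {l g : ℕ} (hg : g ≠ 0)
    (h : ∀ p, p.Prime → ¬ p ^ (rpl p l + 1) ∣ g) : g ∈ Tset l := by
  have hfac : ∀ p, g.factorization p ≤ rpl p l := by
    intro p
    by_cases hp : p.Prime
    · by_contra! hlt
      exact h p hp ((hp.pow_dvd_iff_le_factorization hg).2 hlt)
    · simp [Nat.factorization_eq_zero_of_not_prime g hp]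
  refine ⟨g.factorization, hfac, ?_⟩
  conv_lhs => rw [Nat.prod_primeFactors_pow_factorization hg]
  refine prod_subset (fun p hp => ?_) (fun p _ hp => ?_)
  · have hprime := Nat.prime_of_mem_primeFactors hp
    refine mem_filter.2 ⟨mem_range.2 ?_, hprime⟩
    by_contra! hlarge
    have := h p hprime
    rw [rpl_eq_zero (by omega), pow_one] at this
    exact this (Nat.dvd_of_mem_primeFactors hp)
  · rw [Finsupp.notMem_support_iff.mp (by rwa [Nat.support_factorization]), pow_zero]

lemma le_of_dvd_of_dvd_of_ne {p a b D : ℕ} (hne : a ≠ b) (hba : b ≤ a + D) (hab : a ≤ b + D)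
    (ha : p ∣ a) (hb : p ∣ b) : p ≤ D := by
  rcases hne.lt_or_gt with h | h
  · have := Nat.le_of_dvd (by omega) (Nat.dvd_sub hb ha); omega
  · have := Nat.le_of_dvd (by omega) (Nat.dvd_sub ha hb); omega

lemma gcd_mem_Tset {l D a b : ℕ} (hne : a ≠ b) (hba : b ≤ a + D) (hab : a ≤ b + D)
    (ha : ∀ p, p.Prime → p ≤ D → ¬ p ^ (rpl p l + 1) ∣ a) : Nat.gcd a b ∈ Tset l := by
  refine mem_Tset_of_forall_not_pow_dvd (by simp [Nat.gcd_eq_zero_iff]; omega) fun p hp hdvd => ?_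
  have hpa : p ^ (rpl p l + 1) ∣ a := hdvd.trans (Nat.gcd_dvd_left a b)
  have hpg : p ∣ Nat.gcd a b := (dvd_pow_self p (Nat.succ_ne_zero _)).trans hdvd
  exact ha p hp (le_of_dvd_of_dvd_of_ne hne hba hab (hpg.trans (Nat.gcd_dvd_left a b))
    (hpg.trans (Nat.gcd_dvd_right a b))) hpa

lemma exists_add_not_dvd {m : ℕ} (A : Finset ℕ) (hA : #A < m) : ∃ c, ∀ a ∈ A, ¬ m ∣ c + a := by
  have : NeZero m := ⟨by omega⟩
  obtain ⟨z, -, hz⟩ := exists_mem_notMem_of_card_lt_card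
    (s := A.image fun a : ℕ => -(a : ZMod m)) (t := univ) (by simpa using card_image_le.trans_lt hA)
  refine ⟨z.val, fun a ha hdvd => hz (mem_image.2 ⟨a, ha, ?_⟩)⟩
  rw [← ZMod.natCast_eq_zero_iff] at hdvd
  push_cast at hdvd
  rw [ZMod.natCast_zmod_val] at hdvd
  exact (eq_neg_of_add_eq_zero_left hdvd).symm

def nextPowProd (l N : ℕ) : ℕ := ∏ p ∈ (range (N + 1)).filter Nat.Prime, p ^ (rpl p l + 1)

lemma nextPowProd_pos (l N : ℕ) : 0 < nextPowProd l N :=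
  prod_pos fun _ hp => pow_pos (mem_filter.1 hp).2.pos _

lemma pow_dvd_nextPowProd {l N p : ℕ} (hp : p.Prime) (hpN : p ≤ N) :
    p ^ (rpl p l + 1) ∣ nextPowProd l N :=
  dvd_prod_of_mem _ (mem_filter.2 ⟨mem_range.2 (by omega), hp⟩)

lemma exists_modEq_nextPowProd (l N n : ℕ) (c : ℕ → ℕ) :
    ∃ X, n < X ∧ X ≤ n + 2 * nextPowProd l N ∧
      ∀ p, p.Prime → p ≤ N → X ≡ c p [MOD p ^ (rpl p l + 1)] := by
  set M := nextPowProd l N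
  have hM : 0 < M := nextPowProd_pos l N
  have hs : ∀ p ∈ (range (N + 1)).filter Nat.Prime, p ^ (rpl p l + 1) ≠ 0 :=
    fun p hp => (pow_pos (mem_filter.1 hp).2.pos _).ne'
  have hcop : Set.Pairwise ((range (N + 1)).filter Nat.Prime : Set ℕ)
      (Function.onFun Nat.Coprime fun p => p ^ (rpl p l + 1)) := fun p hp q hq hpq =>
    Nat.Coprime.pow _ _ ((Nat.coprime_primes (mem_filter.1 hp).2 (mem_filter.1 hq).2).2 hpq)
  let X₀ := Nat.chineseRemainderOfFinset c _ _ hs hcop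
  have hX₀M : X₀.1 < M := Nat.chineseRemainderOfFinset_lt_prod c _ hs hcop
  refine ⟨X₀.1 + M * (n / M + 1), ?_, ?_, fun p hp hpN => ?_⟩
  · have := Nat.lt_mul_div_succ n hM; omega
  · have := Nat.mul_div_le n M; rw [mul_add]; omega
  · have hshift : X₀.1 + M * (n / M + 1) ≡ X₀.1 [MOD M] := Nat.add_mul_mod_self_left _ _ _
    exact (hshift.of_dvd (pow_dvd_nextPowProd hp hpN)).trans
      (X₀.2 p (mem_filter.2 ⟨mem_range.2 (by omega), hp⟩))

lemma exists_residue_not_pow_dvd {h l Q p : ℕ} (hp : p.Prime)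
    (hQ : ∀ q, q.Prime → q ≤ h * (2 * l + 1) → q ^ (rpl q l + 1) ∣ Q) :
    ∃ c, ∀ i < h, ∀ s ≤ 2 * l, ¬ p ^ (rpl p l + 1) ∣ c + i * Q + s := by
  by_cases hpB : p ≤ h * (2 * l + 1)
  · refine ⟨1, fun i _ s hs hdvd => ?_⟩
    rw [show 1 + i * Q + s = i * Q + (1 + s) by ring,
      Nat.dvd_add_right (dvd_mul_of_dvd_right (hQ p hp hpB) i)] at hdvd
    have := Nat.le_of_dvd (by omega) hdvd
    have := lt_pow_rpl_succ l hp.two_le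
    omega
  · obtain ⟨c, hc⟩ := exists_add_not_dvd (m := p)
      ((range h ×ˢ range (2 * l + 1)).image fun is => is.1 * Q + is.2)
      (card_image_le.trans_lt (by simp only [card_product, card_range]; omega))
    refine ⟨c, fun i hi s hs hdvd => hc _ (mem_image.2 ⟨(i, s), by simp; omega, rfl⟩) ?_⟩
    rw [← add_assoc]
    exact (dvd_pow_self p (Nat.succ_ne_zero _)).trans hdvd

lemma exists_of_mem_blocks {X Q h l a : ℕ}
    (ha : a ∈ ⋃ i ∈ range h, Set.Icc (X + i * Q) (X + i * Q + 2 * l)) :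
    ∃ i < h, ∃ s ≤ 2 * l, a = X + i * Q + s := by
  simp only [Set.mem_iUnion, Set.mem_Icc, mem_range] at ha
  obtain ⟨i, hi, hXa, haX⟩ := ha
  exact ⟨i, hi, a - (X + i * Q), by omega, by omega⟩

def blockSpacing (h l : ℕ) : ℕ := nextPowProd l (h * (2 * l + 1))

/-- there is `m : ℕ × ℕ → ℕ` such that every interval
`[n, n + m(h,l)]` contains `S = ∪_{i=1}^h [x_i, x_i + 2l]` (with
`x_1 < ⋯ < x_h` positive) whose distinct elements have gcd in `T(l)`. -/
theorem interval_gcd_in_Tl :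
    ∃ m : ℕ → ℕ → ℕ, ∀ h l n : ℕ, 0 < h → 0 < l → 0 < n →
      ∃ x : ℕ → ℕ, (∀ i, i < h → 0 < x i) ∧ (∀ i j, i < j → j < h → x i < x j) ∧
        (⋃ i ∈ Finset.range h, Set.Icc (x i) (x i + 2 * l)) ⊆
          Set.Icc n (n + m h l) ∧
        (∀ a ∈ ⋃ i ∈ Finset.range h, Set.Icc (x i) (x i + 2 * l),
         ∀ b ∈ ⋃ i ∈ Finset.range h, Set.Icc (x i) (x i + 2 * l),
            a ≠ b → Nat.gcd a b ∈ Tset l) := by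
  refine ⟨fun h l => h * blockSpacing h l + 2 * l +
    2 * nextPowProd l (h * blockSpacing h l + 2 * l), ?_⟩
  intro h l n _ _ _
  beta_reduce
  set Q := blockSpacing h l
  set D := h * Q + 2 * l
  have hQ : 0 < Q := nextPowProd_pos _ _
  choose! c hc using fun (p : ℕ) (hp : p.Prime) =>
    exists_residue_not_pow_dvd (h := h) (Q := Q) hp fun q hq hqB => pow_dvd_nextPowProd hq hqB
  obtain ⟨X, hnX, hXn, hX⟩ := exists_modEq_nextPowProd l D n c
  refine ⟨fun i => X + i * Q, ?_, ?_, ?_, ?_⟩ <;> beta_reduce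
  · intro i _
    omega
  · intro i j hij _
    have := Nat.mul_lt_mul_of_pos_right hij hQ
    omega
  · intro a ha
    obtain ⟨i, hi, s, hs, rfl⟩ := exists_of_mem_blocks ha
    have := Nat.mul_le_mul_right Q hi.le
    exact ⟨by omega, by omega⟩
  · intro a ha b hb hab
    obtain ⟨i, hi, s, hs, rfl⟩ := exists_of_mem_blocks ha
    obtain ⟨j, hj, t, ht, rfl⟩ := exists_of_mem_blocks hb
    have := Nat.mul_le_mul_right Q hi.le
    have := Nat.mul_le_mul_right Q hj.le
    refine gcd_mem_Tset (D := D) hab (by omega) (by omega) fun p hp hpD hdvd => hc p hp i hi s hs ?_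
    exact ((((hX p hp hpD).add_right _).add_right _).dvd_iff dvd_rfl).1 hdvd
end

section
/- Let k, l ∈ ℕ, let H_0 be an infinite pairwise prime subset of ℕ, and let A be a (2l+1)-syndetic set such that there do NOT exist x, r ∈ ℕ and n ∈ H_0 with r ≡ 1 (mod n), x ∈ A and x·n^k·r ∈ A. Let F ⊆ T(l)\{1} be such that (F, h, l) is an A-Triveni triplet for every h ∈ ℕ. Then there exists F' ⊆ T(l)\{1} with F ⊊ F' such that (F', h, l) is an A-Triveni triplet for every h ∈ ℕ. -/
/-!
Write `N = 2l + 1` and fix `h`. Take an `F`-family of size `h + N + 1`; since at most `N` members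
of a pairwise prime set have a prime factor `≤ N`, each `B u` contains an `N`-rough `y u`, and
the rest of the family still has size `h`. By the Chinese remainder theorem choose a shift `m`
such that, for each `u ∈ F` with `u ≤ N`, `m + u ≡ u y_u n_u ^ k (mod u y_u n_u ^ (k + 1))` with a
fresh `n_u ∈ H0`; the pattern hypothesis then keeps `m + u` out of `A`. Syndeticity gives some
`m + i ∈ A` with `i ∉ F`. As `m / i` is divisible by `N!`, by the rest of the family and by all
earlier choices, `x = m / i + 1` is coprime to all of them; it is coprime to each `y u` because
`y u ∣ m + u`, `x ∣ m + i` and `0 < |u - i| < N`. Repeating this `N h` times, some slot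
`i ∈ [2, N] \ F` receives `h` pairwise coprime `x`, which extends the family to `F ∪ {i}`.
Finally `[2, N]` is finite and being a Triveni triplet is monotone in `h`, so a single slot works
for every `h`.
-/

open scoped Nat

lemma Tset_finite (l : ℕ) : (Tset l).Finite := by
  refine (Set.finite_Iic (∏ p ∈ (Finset.range (2 * l + 2)).filter Nat.Prime, p ^ rpl p l)).subset ?_
  rintro m ⟨r, hr, rfl⟩
  exact Finset.prod_le_prod' fun p hp =>
    Nat.pow_le_pow_right (Finset.mem_filter.1 hp).2.pos (hr p)

lemma mem_Tset_of_pos_of_le {l i : ℕ} (hi : 0 < i) (hil : i ≤ 2 * l + 1) : i ∈ Tset l := by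
  refine ⟨i.factorization, fun p => ?_, ?_⟩
  · exact Nat.le_findGreatest ((Nat.factorization_lt p hi.ne').le.trans hil)
      ((Nat.ordProj_le p hi.ne').trans hil)
  · have hsupp : i.factorization.support ⊆ (Finset.range (2 * l + 2)).filter Nat.Prime := by
      intro p hp
      rw [Nat.support_factorization] at hp
      have := Nat.le_of_mem_primeFactors hp
      exact Finset.mem_filter.2 ⟨Finset.mem_range.2 (by omega), Nat.prime_of_mem_primeFactors hp⟩
    exact (Nat.prod_factorization_pow_eq_self hi.ne').symm.trans
      (Finsupp.prod_of_support_subset _ hsupp _ fun _ _ => pow_zero _)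

namespace PairwisePrimeSet

variable {B : Set ℕ}

lemma mono {C : Set ℕ} (hCB : C ⊆ B) (hB : PairwisePrimeSet B) : PairwisePrimeSet C :=
  ⟨fun x hx => hB.1 x (hCB hx), fun a ha b hb => hB.2 a (hCB ha) b (hCB hb)⟩

lemma injOn_minFac_gcd (hB : PairwisePrimeSet B) (c : ℕ) :
    Set.InjOn (fun b => (Nat.gcd b c).minFac) {b ∈ B | ¬ Nat.Coprime b c} := by
  intro a ha b hb (hab : (Nat.gcd a c).minFac = (Nat.gcd b c).minFac)
  by_contra hne
  have hd : (Nat.gcd a c).minFac ∣ Nat.gcd a b :=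
    Nat.dvd_gcd ((Nat.minFac_dvd _).trans (Nat.gcd_dvd_left _ _))
      (hab ▸ (Nat.minFac_dvd _).trans (Nat.gcd_dvd_left _ _))
  rw [hB.2 a ha.1 b hb.1 hne] at hd
  exact (Nat.minFac_prime ha.2).ne_one (Nat.dvd_one.1 hd)

lemma exists_coprime_factorial (hB : PairwisePrimeSet B) {N : ℕ} (hN : N < B.ncard) :
    ∃ y ∈ B, Nat.Coprime y N ! := by
  by_contra! hB'
  have hsub : B ⊆ {b ∈ B | ¬ Nat.Coprime b N !} := fun b hb => ⟨hb, hB' b hb⟩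
  have hle := Set.ncard_le_ncard_of_injOn _ (t := Set.Icc 1 N) (fun b hb => ?_)
    ((hB.injOn_minFac_gcd N !).mono hsub) (Set.finite_Icc 1 N)
  · simp only [Set.ncard_eq_toFinset_card', Set.toFinset_Icc, Nat.card_Icc] at hle
    omega
  · have hp := Nat.minFac_prime (hB' b hb)
    exact ⟨hp.one_lt.le, hp.dvd_factorial.1 ((Nat.minFac_dvd _).trans (Nat.gcd_dvd_right _ _))⟩

lemma finite_not_coprime (hB : PairwisePrimeSet B) {Q : ℕ} (hQ : 0 < Q) :
    {b ∈ B | ¬ Nat.Coprime b Q}.Finite := by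
  refine Set.Finite.of_finite_image ((Set.finite_Iic Q).subset ?_) (hB.injOn_minFac_gcd Q)
  rintro _ ⟨b, -, rfl⟩
  exact (Nat.minFac_le (Nat.gcd_pos_of_pos_right _ hQ)).trans (Nat.gcd_le_right _ hQ)

lemma exists_injective_coprime (hB : PairwisePrimeSet B) (hinf : B.Infinite) {Q : ℕ}
    (hQ : 0 < Q) : ∃ n : ℕ → ℕ, Function.Injective n ∧ ∀ i, n i ∈ B ∧ Nat.Coprime (n i) Q := by
  let e := (hinf.sdiff (hB.finite_not_coprime hQ)).natEmbedding
  refine ⟨fun i => e i, fun i j hij => e.injective (Subtype.ext hij), fun i => ?_⟩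
  obtain ⟨hB, hQ⟩ := (e i).2
  exact ⟨hB, by_contra fun h => hQ ⟨hB, h⟩⟩

end PairwisePrimeSet

lemma Set.exists_forall_subset_ncard_eq {ι α : Type*} {F : Set ι} {S : ι → Set α} {h : ℕ}
    (hS : ∀ u ∈ F, h ≤ (S u).ncard) : ∃ C : ι → Set α, ∀ u ∈ F, C u ⊆ S u ∧ (C u).ncard = h := by
  choose! C hCS hC using fun u hu => Set.exists_subset_card_eq (hS u hu)
  exact ⟨C, fun u hu => ⟨hCS u hu, hC u hu⟩⟩

def TriveniFamily (A F : Set ℕ) (h : ℕ) (B : ℕ → Set ℕ) : Prop :=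
  (∀ u ∈ F, PairwisePrimeSet (B u) ∧ (B u).ncard = h ∧ ∀ x ∈ B u, u * x ∈ A) ∧
    ∀ u ∈ F, ∀ v ∈ F, u ≠ v → ∀ x ∈ B u, ∀ y ∈ B v, Nat.Coprime x y

lemma triveniTriplet_iff {A F : Set ℕ} {h l : ℕ} :
    TriveniTriplet A F h l ↔ F ⊆ Tset l \ {1} ∧ ∃ B, TriveniFamily A F h B :=
  Iff.rfl

namespace TriveniFamily

variable {A F : Set ℕ} {h h' : ℕ} {B C : ℕ → Set ℕ}

lemma of_subset (hB : TriveniFamily A F h' B) (hCB : ∀ u ∈ F, C u ⊆ B u)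
    (hC : ∀ u ∈ F, (C u).ncard = h) : TriveniFamily A F h C :=
  ⟨fun u hu => ⟨(hB.1 u hu).1.mono (hCB u hu), hC u hu,
      fun x hx => (hB.1 u hu).2.2 x (hCB u hu hx)⟩,
    fun u hu v hv huv x hx y hy => hB.2 u hu v hv huv x (hCB u hu hx) y (hCB v hv hy)⟩

lemma exists_of_le (hB : TriveniFamily A F h' B) (hle : h ≤ h') :
    ∃ C, TriveniFamily A F h C := by
  obtain ⟨C, hC⟩ := Set.exists_forall_subset_ncard_eq (S := B) fun u hu =>
    (hB.1 u hu).2.1 ▸ hle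
  exact ⟨C, hB.of_subset (fun u hu => (hC u hu).1) fun u hu => (hC u hu).2⟩

lemma exists_coprime_factorial_split {N : ℕ} (hB : TriveniFamily A F (h + N + 1) B) :
    ∃ (y : ℕ → ℕ) (C : ℕ → Set ℕ), TriveniFamily A F h C ∧
      ∀ u ∈ F, y u ∈ B u ∧ Nat.Coprime (y u) N ! ∧ C u ⊆ B u \ {y u} := by
  choose! y hyB hy using fun u hu =>
    (hB.1 u hu).1.exists_coprime_factorial (N := N) (by rw [(hB.1 u hu).2.1]; omega)
  obtain ⟨C, hC⟩ := Set.exists_forall_subset_ncard_eq (S := fun u => B u \ {y u}) (h := h)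
    fun u hu => by rw [Set.ncard_sdiff_singleton_of_mem (hyB u hu), (hB.1 u hu).2.1]; omega
  exact ⟨y, C, hB.of_subset (fun u hu => (hC u hu).1.trans Set.sdiff_subset)
    fun u hu => (hC u hu).2, fun u hu => ⟨hyB u hu, hy u hu, (hC u hu).1⟩⟩

lemma coprime_of_mem (hB : TriveniFamily A F h B) {u v x y : ℕ} (hu : u ∈ F) (hv : v ∈ F)
    (hx : x ∈ B u) (hy : y ∈ B v) (hxy : u = v → x ≠ y) : Nat.Coprime x y := by
  by_cases huv : u = v
  · subst huv
    exact (hB.1 u hu).1.2 x hx y hy (hxy rfl)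
  · exact hB.2 u hu v hv huv x hx y hy

lemma insert_update (hB : TriveniFamily A F h B) {u : ℕ} (huF : u ∉ F) {X : Set ℕ}
    (hX : PairwisePrimeSet X) (hXh : X.ncard = h) (hXA : ∀ x ∈ X, u * x ∈ A)
    (hXB : ∀ v ∈ F, ∀ y ∈ B v, ∀ x ∈ X, Nat.Coprime x y) :
    TriveniFamily A (insert u F) h (Function.update B u X) := by
  have hupd : ∀ v ∈ F, Function.update B u X v = B v := fun v hv =>
    Function.update_of_ne (by rintro rfl; exact huF hv) _ _
  refine ⟨?_, ?_⟩
  · rintro v (rfl | hv)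
    · simpa using ⟨hX, hXh, hXA⟩
    · rw [hupd v hv]
      exact hB.1 v hv
  · rintro v (rfl | hv) w (rfl | hw) hvw x hx y hy
    · exact absurd rfl hvw
    · rw [Function.update_self] at hx
      rw [hupd w hw] at hy
      exact hXB w hw y hy x hx
    · rw [Function.update_self] at hy
      rw [hupd v hv] at hx
      exact (hXB v hv x hx y hy).symm
    · rw [hupd v hv] at hx
      rw [hupd w hw] at hy
      exact hB.2 v hv w hw hvw x hx y hy

end TriveniFamily

lemma TriveniTriplet.mono {A F : Set ℕ} {h h' l : ℕ} (ht : TriveniTriplet A F h' l)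
    (hle : h ≤ h') : TriveniTriplet A F h l :=
  let ⟨hF, _, hB⟩ := ht
  ⟨hF, TriveniFamily.exists_of_le hB hle⟩

lemma Nat.exists_eq_mul_of_modEq_mul {a b n : ℕ} (ha : 0 < a) (h : a ≡ b [MOD b * n]) :
    ∃ r, 0 < r ∧ r ≡ 1 [MOD n] ∧ a = b * r := by
  obtain ⟨r, rfl⟩ : b ∣ a :=
    (Nat.modEq_zero_iff_dvd).1 ((h.of_mul_right n).trans ((Nat.modEq_zero_iff_dvd).2 dvd_rfl))
  have hb : b ≠ 0 := by rintro rfl; simp at ha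
  exact ⟨r, Nat.pos_of_mul_pos_left ha, Nat.ModEq.mul_left_cancel' hb (by rwa [mul_one]), rfl⟩

lemma Nat.exists_pos_dvd_modEq {ι : Type*} (s : Finset ι) (a μ : ι → ℕ) (hμ : ∀ i ∈ s, μ i ≠ 0)
    (hpair : (s : Set ι).Pairwise fun i j => Nat.Coprime (μ i) (μ j)) {M : ℕ} (hM : 0 < M)
    (hMμ : ∀ i ∈ s, Nat.Coprime M (μ i)) : ∃ m, 0 < m ∧ M ∣ m ∧ ∀ i ∈ s, m ≡ a i [MOD μ i] := by
  obtain ⟨m₀, hm₀⟩ := Nat.chineseRemainderOfFinset a μ s hμ hpair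
  obtain ⟨m, hmM, hm⟩ := Nat.chineseRemainder (Nat.Coprime.prod_right hMμ) 0 m₀
  have hprod : 0 < ∏ i ∈ s, μ i := Finset.prod_pos fun i hi => Nat.pos_of_ne_zero (hμ i hi)
  refine ⟨m + M * ∏ i ∈ s, μ i, by positivity,
    Nat.dvd_add ((Nat.modEq_zero_iff_dvd).1 hmM) (dvd_mul_right _ _), fun i hi => ?_⟩
  calc m + M * ∏ i ∈ s, μ i ≡ m + 0 [MOD μ i] :=
        Nat.ModEq.add_left _ ((Nat.modEq_zero_iff_dvd).2
          (dvd_mul_of_dvd_right (Finset.dvd_prod_of_mem _ hi) _))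
    _ ≡ m₀ [MOD μ i] := (hm.of_dvd (Finset.dvd_prod_of_mem _ hi))
    _ ≡ a i [MOD μ i] := hm₀ i hi

lemma Nat.add_modEq_mul_of_modEq {m i b μ : ℕ} (hm : i ∣ m) (hb : i ∣ b) (hle : i ≤ b)
    (hcop : Nat.Coprime i μ) (h : m ≡ b - i [MOD μ]) : m + i ≡ b [MOD i * μ] := by
  refine (Nat.modEq_and_modEq_iff_modEq_mul hcop).1 ⟨?_, ?_⟩
  · exact ((Nat.modEq_zero_iff_dvd).2 (dvd_add hm dvd_rfl)).trans
      ((Nat.modEq_zero_iff_dvd).2 hb).symm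
  · simpa [Nat.sub_add_cancel hle] using h.add_right i

lemma Nat.eq_one_of_dvd_add_of_dvd_add {N m i j d : ℕ} (hi : i ≤ N) (hj : j ≤ N) (hij : i ≠ j)
    (hd : Nat.Coprime d N !) (hdi : d ∣ m + i) (hdj : d ∣ m + j) : d = 1 := by
  wlog hji : j < i generalizing i j
  · exact this hj hi hij.symm hdj hdi (by omega)
  have hdij : d ∣ i - j := by simpa [Nat.add_sub_add_left] using Nat.dvd_sub hdi hdj
  exact hd.eq_one_of_dvd (hdij.trans (Nat.dvd_factorial (by omega) (by omega)))

lemma Nat.exists_mul_eq_add_coprime {N G m i : ℕ} (hi : 0 < i) (hiN : i ≤ N)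
    (hm : N ! * G ∣ m) : ∃ x, i * x = m + i ∧ Nat.Coprime x G := by
  obtain ⟨c, rfl⟩ := hm
  obtain ⟨d, hd⟩ := Nat.dvd_factorial hi hiN
  exact ⟨d * c * G + 1, by rw [hd]; ring,
    (Nat.coprime_mul_right_add_left 1 G (d * c)).2 (Nat.coprime_one_left G)⟩

def AvoidsPowerPattern (A H0 : Set ℕ) (k : ℕ) : Prop :=
  ¬∃ x r n : ℕ, n ∈ H0 ∧ 0 < r ∧ r ≡ 1 [MOD n] ∧ x ∈ A ∧ x * n ^ k * r ∈ A

lemma AvoidsPowerPattern.notMem {A H0 : Set ℕ} {k : ℕ} (hpat : AvoidsPowerPattern A H0 k)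
    {x n a : ℕ} (hn : n ∈ H0) (hx : x ∈ A) (ha : 0 < a)
    (hmod : a ≡ x * n ^ k [MOD x * n ^ k * n]) : a ∉ A := by
  obtain ⟨r, hr0, hr1, rfl⟩ := Nat.exists_eq_mul_of_modEq_mul ha hmod
  exact fun hmem => hpat ⟨x, r, n, hn, hr0, hr1, hx, hmem⟩

/-- `z i` witnesses `i * z i ∈ A` and serves to keep slot `i` of a window `m + 1, …, m + N` out
of `A`; `G` collects what the elements found in the free slots must be coprime to. -/
structure ForbiddenSlots (A : Set ℕ) (N G : ℕ) (Φ : Finset ℕ) (z : ℕ → ℕ) : Prop where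
  subset : Φ ⊆ Finset.Icc 1 N
  mul_mem : ∀ i ∈ Φ, i * z i ∈ A
  pos : ∀ i ∈ Φ, 0 < z i
  coprime_factorial : ∀ i ∈ Φ, Nat.Coprime (z i) N !
  coprime : ∀ i ∈ Φ, Nat.Coprime G (z i)
  pairwise : (Φ : Set ℕ).Pairwise fun i j => Nat.Coprime (z i) (z j)

namespace ForbiddenSlots

variable {A H0 : Set ℕ} {k N G : ℕ} {Φ : Finset ℕ} {z : ℕ → ℕ}

lemma mul_right (hS : ForbiddenSlots A N G Φ z) {G' : ℕ} (hG' : ∀ i ∈ Φ, Nat.Coprime G' (z i)) :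
    ForbiddenSlots A N (G * G') Φ z :=
  { hS with coprime := fun i hi => (hS.coprime i hi).mul_left (hG' i hi) }

lemma insert_update (hS : ForbiddenSlots A N G Φ z) {i a : ℕ} (hi : i ∈ Finset.Icc 1 N)
    (hiΦ : i ∉ Φ) (ha : i * a ∈ A) (ha0 : 0 < a) (haN : Nat.Coprime a N !) (haG : Nat.Coprime G a)
    (haz : ∀ j ∈ Φ, Nat.Coprime a (z j)) :
    ForbiddenSlots A N G (insert i Φ) (Function.update z i a) := by
  have hz : ∀ j ∈ Φ, Function.update z i a j = z j := fun j hj =>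
    Function.update_of_ne (ne_of_mem_of_not_mem hj hiΦ) _ _
  have hzi : Function.update z i a i = a := Function.update_self _ _ _
  refine ⟨Finset.insert_subset hi hS.subset, ?_, ?_, ?_, ?_, ?_⟩
  · exact (Finset.forall_mem_insert _ _ _).2
      ⟨by rwa [hzi], fun j hj => hz j hj ▸ hS.mul_mem j hj⟩
  · exact (Finset.forall_mem_insert _ _ _).2 ⟨by rwa [hzi], fun j hj => hz j hj ▸ hS.pos j hj⟩
  · exact (Finset.forall_mem_insert _ _ _).2
      ⟨by rwa [hzi], fun j hj => hz j hj ▸ hS.coprime_factorial j hj⟩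
  · exact (Finset.forall_mem_insert _ _ _).2 ⟨by rwa [hzi], fun j hj => hz j hj ▸ hS.coprime j hj⟩
  · rw [Finset.coe_insert, Set.pairwise_insert]
    refine ⟨fun j hj j' hj' hjj' => ?_, fun j hj _ => ?_⟩
    · show Nat.Coprime (Function.update z i a j) (Function.update z i a j')
      rw [hz j hj, hz j' hj']
      exact hS.pairwise hj hj' hjj'
    · rw [hzi, hz j hj]
      exact ⟨haz j hj, (haz j hj).symm⟩

/-- The shift `m` is chosen by the Chinese remainder theorem so that, for each `i ∈ Φ`,
`m + i ≡ i z_i n_i ^ k (mod i z_i n_i ^ (k + 1))` for a fresh `n_i ∈ H0`; then `m + i ∉ A`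
because `i z_i ∈ A`. -/
lemma exists_shift (hS : ForbiddenSlots A N G Φ z) (hG0 : 0 < G) (hH0 : PairwisePrimeSet H0)
    (hinf : H0.Infinite) (hpat : AvoidsPowerPattern A H0 k) :
    ∃ m, 0 < m ∧ N ! * G ∣ m ∧ ∀ i ∈ Φ, m + i ∉ A ∧ z i ∣ m + i := by
  have hprod : 0 < ∏ i ∈ Φ, z i := Finset.prod_pos hS.pos
  obtain ⟨n, hninj, hn⟩ := hH0.exists_injective_coprime hinf (Q := N ! * G * ∏ i ∈ Φ, z i)
    (by positivity)
  have hn0 : ∀ i, 0 < n i := fun i => hH0.1 _ (hn i).1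
  have hnM : ∀ i, Nat.Coprime (n i) (N ! * G) := fun i =>
    (hn i).2.coprime_dvd_right (dvd_mul_right _ _)
  have hnz : ∀ i, ∀ j ∈ Φ, Nat.Coprime (n i) (z j) := fun i j hj =>
    (hn i).2.coprime_dvd_right (dvd_mul_of_dvd_right (Finset.dvd_prod_of_mem z hj) _)
  set μ : ℕ → ℕ := fun i => z i * n i ^ (k + 1)
  have hMμ : ∀ i ∈ Φ, Nat.Coprime (N ! * G) (μ i) := fun i hi =>
    ((hS.coprime_factorial i hi).symm.mul_left (hS.coprime i hi)).mul_right
      ((hnM i).symm.pow_right _)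
  have hμ : (Φ : Set ℕ).Pairwise fun i j => Nat.Coprime (μ i) (μ j) := fun i hi j hj hij =>
    ((hS.pairwise hi hj hij).mul_right ((hnz j i hi).symm.pow_right _)).mul_left
      (((hnz i j hj).mul_right
        ((hH0.2 _ (hn i).1 _ (hn j).1 (hninj.ne hij)).pow_right _)).pow_left _)
  obtain ⟨m, hm0, hmM, hmμ⟩ := Nat.exists_pos_dvd_modEq Φ (fun i => i * z i * n i ^ k - i) μ
    (fun i hi => (Nat.mul_pos (hS.pos i hi) (pow_pos (hn0 i) _)).ne') hμ (by positivity) hMμ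
  refine ⟨m, hm0, hmM, fun i hi => ?_⟩
  obtain ⟨hi1, hiN⟩ := Finset.mem_Icc.1 (hS.subset hi)
  have hle : i ≤ i * z i * n i ^ k := by
    rw [mul_assoc]
    exact Nat.le_mul_of_pos_right _ (Nat.mul_pos (hS.pos i hi) (pow_pos (hn0 i) _))
  have hidvd : i ∣ N ! := Nat.dvd_factorial hi1 hiN
  have hiμ : Nat.Coprime i (μ i) :=
    ((hMμ i hi).coprime_dvd_left (dvd_mul_right _ _)).coprime_dvd_left hidvd
  have hmod : m + i ≡ i * z i * n i ^ k [MOD i * μ i] :=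
    Nat.add_modEq_mul_of_modEq (hidvd.trans ((dvd_mul_right _ _).trans hmM))
      (dvd_mul_of_dvd_left (dvd_mul_right _ _) _) hle hiμ (hmμ i hi)
  refine ⟨hpat.notMem (hn i).1 (hS.mul_mem i hi) (by omega) ?_, ?_⟩
  · rwa [show i * z i * n i ^ k * n i = i * μ i by simp only [μ]; ring]
  · exact ((hmod.of_dvd (dvd_mul_of_dvd_right (dvd_mul_right _ _) _)).dvd_iff dvd_rfl).2
      (dvd_mul_of_dvd_left (dvd_mul_left _ _) _)

lemma exists_free_slot (hS : ForbiddenSlots A N G Φ z) (hG0 : 0 < G) (hA : SyndeticWith A N)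
    (hH0 : PairwisePrimeSet H0) (hinf : H0.Infinite) (hpat : AvoidsPowerPattern A H0 k) :
    ∃ i ∈ Finset.Icc 1 N \ Φ, ∃ x, 1 < x ∧ i * x ∈ A ∧ Nat.Coprime x G ∧
      ∀ j ∈ Φ, Nat.Coprime x (z j) := by
  obtain ⟨m, hm0, hmG, hm⟩ := hS.exists_shift hG0 hH0 hinf hpat
  obtain ⟨a, haA, hma, ham⟩ := hA (m + 1) (by omega)
  have ha : m + (a - m) = a := by omega
  have hiΦ : a - m ∉ Φ := fun h => (hm _ h).1 (by rwa [ha])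
  obtain ⟨x, hx, hxG⟩ := Nat.exists_mul_eq_add_coprime (by omega) (by omega : a - m ≤ N) hmG
  refine ⟨a - m, Finset.mem_sdiff.2 ⟨Finset.mem_Icc.2 ⟨by omega, by omega⟩, hiΦ⟩, x, ?_,
    by rwa [hx, ha], hxG, fun j hj => ?_⟩
  · by_contra! hx1
    have : (a - m) * x ≤ (a - m) * 1 := Nat.mul_le_mul_left _ hx1
    omega
  · exact Nat.eq_one_of_dvd_add_of_dvd_add (by omega : a - m ≤ N)
      (Finset.mem_Icc.1 (hS.subset hj)).2 (ne_of_mem_of_not_mem hj hiΦ).symm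
      ((hS.coprime_factorial j hj).coprime_dvd_left (Nat.gcd_dvd_right _ _))
      ((Nat.gcd_dvd_left _ _).trans (hx ▸ dvd_mul_left _ _))
      ((Nat.gcd_dvd_right _ _).trans (hm j hj).2)

lemma exists_pairs (hS : ForbiddenSlots A N G Φ z) (hG0 : 0 < G) (hA : SyndeticWith A N)
    (hH0 : PairwisePrimeSet H0) (hinf : H0.Infinite) (hpat : AvoidsPowerPattern A H0 k)
    (n : ℕ) :
    ∃ P : Finset (ℕ × ℕ), P.card = n ∧
      (P : Set (ℕ × ℕ)).Pairwise (fun p q => Nat.Coprime p.2 q.2) ∧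
      ∀ p ∈ P, p.1 ∈ Finset.Icc 1 N \ Φ ∧ 1 < p.2 ∧ p.1 * p.2 ∈ A ∧ Nat.Coprime p.2 G ∧
        ∀ j ∈ Φ, Nat.Coprime p.2 (z j) := by
  induction n with
  | zero => exact ⟨∅, by simp⟩
  | succ n ih =>
    obtain ⟨P, hcard, hpair, hP⟩ := ih
    have hprod : 0 < ∏ p ∈ P, p.2 := Finset.prod_pos fun p hp => by linarith [(hP p hp).2.1]
    obtain ⟨i, hi, x, hx1, hxA, hxG, hxz⟩ :=
      (hS.mul_right fun j hj => Nat.Coprime.prod_left fun p hp => (hP p hp).2.2.2.2 j hj)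
        |>.exists_free_slot (by positivity) hA hH0 hinf hpat
    have hxP : ∀ p ∈ P, Nat.Coprime x p.2 := fun p hp =>
      hxG.coprime_dvd_right (dvd_mul_of_dvd_right (Finset.dvd_prod_of_mem _ hp) _)
    have hnew : (i, x) ∉ P := fun h => hx1.ne' ((Nat.coprime_self x).1 (hxP _ h))
    refine ⟨insert (i, x) P, by rw [Finset.card_insert_of_notMem hnew, hcard], ?_, ?_⟩
    · rw [Finset.coe_insert, Set.pairwise_insert]
      exact ⟨hpair, fun p hp _ => ⟨hxP p hp, (hxP p hp).symm⟩⟩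
    · intro p hp
      rcases Finset.mem_insert.1 hp with rfl | hp
      · exact ⟨hi, hx1, hxA, hxG.coprime_dvd_right (dvd_mul_right _ _), hxz⟩
      · exact hP p hp

/-- If some `x ∈ A` could itself be produced in slot `1`, it is used to forbid slot `1`;
otherwise no pair lands in slot `1` at all. -/
lemma exists_pairs_of_one_notMem (hS : ForbiddenSlots A N G Φ z) (h1 : 1 ∉ Φ) (hG0 : 0 < G)
    (hGN : N ! ∣ G) (hA : SyndeticWith A N) (hH0 : PairwisePrimeSet H0) (hinf : H0.Infinite)
    (hpat : AvoidsPowerPattern A H0 k) (n : ℕ) :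
    ∃ P : Finset (ℕ × ℕ), P.card = n ∧
      (P : Set (ℕ × ℕ)).Pairwise (fun p q => Nat.Coprime p.2 q.2) ∧
      ∀ p ∈ P, p.1 ∈ Finset.Icc 2 N \ Φ ∧ 1 < p.2 ∧ p.1 * p.2 ∈ A ∧ Nat.Coprime p.2 G := by
  by_cases hblock : ∃ x, 1 < x ∧ 1 * x ∈ A ∧ Nat.Coprime x G ∧ ∀ j ∈ Φ, Nat.Coprime x (z j)
  · obtain ⟨a, ha1, haA, haG, haz⟩ := hblock
    have hN : 1 ≤ N := by
      obtain ⟨_, _, h1, h2⟩ := hA 1 one_pos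
      omega
    obtain ⟨P, hcard, hpair, hP⟩ := (hS.insert_update (Finset.mem_Icc.2 ⟨le_rfl, hN⟩) h1 haA
      (by omega) (haG.coprime_dvd_right hGN) haG.symm haz).exists_pairs hG0 hA hH0 hinf hpat n
    refine ⟨P, hcard, hpair, fun p hp => ?_⟩
    obtain ⟨hs, hx1, hxA, hxG, -⟩ := hP p hp
    rw [Finset.mem_sdiff, Finset.mem_insert, Finset.mem_Icc] at hs
    exact ⟨Finset.mem_sdiff.2 ⟨Finset.mem_Icc.2 ⟨by omega, hs.1.2⟩, fun h => hs.2 (Or.inr h)⟩,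
      hx1, hxA, hxG⟩
  · obtain ⟨P, hcard, hpair, hP⟩ := hS.exists_pairs hG0 hA hH0 hinf hpat n
    refine ⟨P, hcard, hpair, fun p hp => ?_⟩
    obtain ⟨hs, hx1, hxA, hxG, hxz⟩ := hP p hp
    have hp1 : p.1 ≠ 1 := fun h => hblock ⟨p.2, hx1, h ▸ hxA, hxG, hxz⟩
    rw [Finset.mem_sdiff, Finset.mem_Icc] at hs
    exact ⟨Finset.mem_sdiff.2 ⟨Finset.mem_Icc.2 ⟨by omega, hs.1.2⟩, hs.2⟩, hx1, hxA, hxG⟩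

end ForbiddenSlots

lemma Finset.exists_fiber_card_eq_of_mul_lt_card {α β : Type*} [DecidableEq α]
    {P : Finset (α × β)} {T : Finset α} {h : ℕ} (hPT : ∀ p ∈ P, p.1 ∈ T)
    (hcard : T.card * h < P.card) :
    ∃ u ∈ T, ∃ X : Finset β, X.card = h ∧ ∀ x ∈ X, (u, x) ∈ P := by
  classical
  obtain ⟨u, hu, hlt⟩ := Finset.exists_lt_card_fiber_of_mul_lt_card_of_maps_to hPT hcard
  have hinj : Set.InjOn Prod.snd (P.filter (·.1 = u) : Set (α × β)) := fun p hp q hq hpq =>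
    Prod.ext ((Finset.mem_filter.1 hp).2.trans (Finset.mem_filter.1 hq).2.symm) hpq
  obtain ⟨X, hXsub, hX⟩ := Finset.exists_subset_card_eq
    (s := (P.filter (·.1 = u)).image Prod.snd) (n := h)
    (by rw [Finset.card_image_of_injOn hinj]; omega)
  refine ⟨u, hu, X, hX, fun x hx => ?_⟩
  obtain ⟨p, hp, rfl⟩ := Finset.mem_image.1 (hXsub hx)
  obtain ⟨hpP, rfl⟩ := Finset.mem_filter.1 hp
  exact hpP

lemma Finset.exists_forall_of_antitone {α : Type*} (s : Finset α) {P : α → ℕ → Prop}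
    (hP : ∀ a, Antitone (P a)) (h : ∀ n, ∃ a ∈ s, P a n) : ∃ a ∈ s, ∀ n, P a n := by
  by_contra! hs
  choose! g hg using hs
  obtain ⟨a, ha, hPa⟩ := h (s.sup g)
  exact hg a ha (hP a (Finset.le_sup ha) hPa)

lemma Set.Finite.exists_pos_dvd_coprime {S : Set ℕ} (hS : S.Finite) (hpos : ∀ c ∈ S, 0 < c) :
    ∃ W, 0 < W ∧ (∀ c ∈ S, c ∣ W) ∧ ∀ y, (∀ c ∈ S, Nat.Coprime c y) → Nat.Coprime W y :=
  ⟨∏ c ∈ hS.toFinset, c, Finset.prod_pos fun c hc => hpos c (hS.mem_toFinset.1 hc),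
    fun _ hc => Finset.dvd_prod_of_mem _ (hS.mem_toFinset.2 hc),
    fun _ hy => Nat.Coprime.prod_left fun c hc => hy c (hS.mem_toFinset.1 hc)⟩

lemma TriveniFamily.exists_insert_of_pairs {A F : Set ℕ} {h W : ℕ} {C : ℕ → Set ℕ}
    (hC : TriveniFamily A F h C) (hCW : ∀ u ∈ F, ∀ c ∈ C u, c ∣ W) {T : Finset ℕ}
    (hTF : ∀ u ∈ T, u ∉ F) {P : Finset (ℕ × ℕ)}
    (hpair : (P : Set (ℕ × ℕ)).Pairwise fun p q => Nat.Coprime p.2 q.2)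
    (hP : ∀ p ∈ P, p.1 ∈ T ∧ 0 < p.2 ∧ p.1 * p.2 ∈ A ∧ Nat.Coprime p.2 W)
    (hcard : T.card * h < P.card) : ∃ u ∈ T, ∃ C', TriveniFamily A (insert u F) h C' := by
  obtain ⟨u, hu, X, hXh, hXP⟩ :=
    Finset.exists_fiber_card_eq_of_mul_lt_card (fun p hp => (hP p hp).1) hcard
  exact ⟨u, hu, _, hC.insert_update (hTF u hu) (X := X)
    ⟨fun x hx => (hP _ (hXP x hx)).2.1,
      fun a ha b hb hab => hpair (hXP a ha) (hXP b hb) (by simpa using hab)⟩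
    (by rw [Set.ncard_coe_finset, hXh]) (fun x hx => (hP _ (hXP x hx)).2.2.1)
    fun v hv c hc x hx => (hP _ (hXP x hx)).2.2.2.coprime_dvd_right (hCW v hv c hc)⟩

lemma exists_triveniTriplet_insert {A H0 F : Set ℕ} {k l h : ℕ}
    (hA : SyndeticWith A (2 * l + 1)) (hH0 : PairwisePrimeSet H0) (hinf : H0.Infinite)
    (hpat : AvoidsPowerPattern A H0 k) (hF : F ⊆ Tset l \ {1}) (hh : 0 < h)
    (hTriv : TriveniTriplet A F (h + (2 * l + 1) + 1) l) :
    ∃ u ∈ Finset.Icc 2 (2 * l + 1), u ∉ F ∧ TriveniTriplet A (insert u F) h l := by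
  classical
  set N := 2 * l + 1
  obtain ⟨-, B, hB⟩ := triveniTriplet_iff.1 hTriv
  obtain ⟨y, C, hC, hy⟩ := hB.exists_coprime_factorial_split
  have hCfin : (⋃ u ∈ F, C u).Finite :=
    ((Tset_finite l).subset fun u hu => (hF hu).1).biUnion fun u hu =>
      Set.finite_of_ncard_pos ((hC.1 u hu).2.1 ▸ hh)
  obtain ⟨W, hW0, hCW, hWcop⟩ := hCfin.exists_pos_dvd_coprime fun c hc => by
    obtain ⟨v, hv, hcv⟩ := Set.mem_iUnion₂.1 hc
    exact (hC.1 v hv).1.1 c hcv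
  set Φ := (Finset.Icc 1 N).filter (· ∈ F)
  have hΦF : ∀ u ∈ Φ, u ∈ F := fun u hu => (Finset.mem_filter.1 hu).2
  have hS : ForbiddenSlots A N (N ! * W) Φ y :=
    { subset := Finset.filter_subset _ _
      mul_mem := fun u hu => (hB.1 u (hΦF u hu)).2.2 _ (hy u (hΦF u hu)).1
      pos := fun u hu => (hB.1 u (hΦF u hu)).1.1 _ (hy u (hΦF u hu)).1
      coprime_factorial := fun u hu => (hy u (hΦF u hu)).2.1
      coprime := fun u hu => (hy u (hΦF u hu)).2.1.symm.mul_left (hWcop _ fun c hc => by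
        obtain ⟨v, hv, hcv⟩ := Set.mem_iUnion₂.1 hc
        exact hB.coprime_of_mem hv (hΦF u hu) ((hy v hv).2.2 hcv).1 (hy u (hΦF u hu)).1
          (by rintro rfl; exact ((hy v hv).2.2 hcv).2))
      pairwise := fun u hu v hv huv => hB.2 u (hΦF u hu) v (hΦF v hv) huv _
        (hy u (hΦF u hu)).1 _ (hy v (hΦF v hv)).1 }
  obtain ⟨P, hcard, hpair, hP⟩ := hS.exists_pairs_of_one_notMem
    (fun h1 => (hF (hΦF 1 h1)).2 rfl) (by positivity) (dvd_mul_right _ _) hA hH0 hinf hpat (N * h)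
  have hTcard : (Finset.Icc 2 N \ Φ).card * h < P.card := by
    have : (Finset.Icc 2 N \ Φ).card ≤ N - 1 :=
      (Finset.card_le_card Finset.sdiff_subset).trans (by simp)
    calc (Finset.Icc 2 N \ Φ).card * h ≤ (N - 1) * h := Nat.mul_le_mul_right _ this
      _ < N * h := Nat.mul_lt_mul_of_pos_right (by omega) hh
      _ = P.card := hcard.symm
  have hTF : ∀ u ∈ Finset.Icc 2 N \ Φ, u ∉ F := fun u hu huF => by
    simp only [Finset.mem_sdiff, Finset.mem_Icc, Finset.mem_filter, Φ] at hu
    exact hu.2 ⟨⟨by omega, hu.1.2⟩, huF⟩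
  obtain ⟨u, hu, C', hC'⟩ := hC.exists_insert_of_pairs
    (fun u hu c hc => dvd_mul_of_dvd_right (hCW c (Set.mem_biUnion hu hc)) _) hTF hpair
    (fun p hp => ⟨(hP p hp).1, Nat.zero_lt_of_lt (hP p hp).2.1, (hP p hp).2.2⟩) hTcard
  obtain ⟨hu2, huN⟩ := Finset.mem_Icc.1 (Finset.mem_sdiff.1 hu).1
  exact ⟨u, (Finset.mem_sdiff.1 hu).1, hTF u hu, triveniTriplet_iff.2
    ⟨Set.insert_subset ⟨mem_Tset_of_pos_of_le (by omega) huN, by simp; omega⟩ hF, C', hC'⟩⟩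

theorem higher_order_triveni_general (k l : ℕ)
    (H0 : Set ℕ) (hH0inf : H0.Infinite) (hH0 : PairwisePrimeSet H0)
    (A : Set ℕ) (hA : SyndeticWith A (2 * l + 1))
    (hnot : ¬∃ x r n : ℕ, n ∈ H0 ∧ 0 < r ∧ r ≡ 1 [MOD n] ∧
      x ∈ A ∧ x * n ^ k * r ∈ A)
    (F : Set ℕ) (hF : F ⊆ Tset l \ {1})
    (hTriv : ∀ h : ℕ, 0 < h → TriveniTriplet A F h l) :
    ∃ F' : Set ℕ, F ⊂ F' ∧ F' ⊆ Tset l \ {1} ∧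
      ∀ h : ℕ, 0 < h → TriveniTriplet A F' h l := by
  have hstep : ∀ h, ∃ u ∈ Finset.Icc 2 (2 * l + 1),
      u ∉ F ∧ TriveniTriplet A (insert u F) h l := fun h => by
    obtain ⟨u, hu, huF, ht⟩ := exists_triveniTriplet_insert hA hH0 hH0inf hnot hF h.succ_pos
      (hTriv _ (by omega))
    exact ⟨u, hu, huF, ht.mono h.le_succ⟩
  obtain ⟨u, -, hall⟩ := Finset.exists_forall_of_antitone _
    (fun u _ _ hle ht => ⟨ht.1, ht.2.mono hle⟩) hstep
  exact ⟨insert u F, Set.ssubset_insert (hall 0).1, (hall 0).2.1, fun h _ => (hall h).2⟩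

/-- Triveni triplets of strictly higher order exist. -/
theorem higher_order_triveni (k l : ℕ) (hk : 0 < k) (hl : 0 < l)
    (H0 : Set ℕ) (hH0inf : H0.Infinite) (hH0 : PairwisePrimeSet H0)
    (A : Set ℕ) (hA : SyndeticWith A (2 * l + 1))
    (hnot : ¬∃ x r n : ℕ, n ∈ H0 ∧ 0 < r ∧ r ≡ 1 [MOD n] ∧
      x ∈ A ∧ x * n ^ k * r ∈ A)
    (F : Set ℕ) (hF : F ⊆ Tset l \ {1})
    (hTriv : ∀ h : ℕ, 0 < h → TriveniTriplet A F h l) :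
    ∃ F' : Set ℕ, F ⊂ F' ∧ F' ⊆ Tset l \ {1} ∧
      ∀ h : ℕ, 0 < h → TriveniTriplet A F' h l :=
  higher_order_triveni_general k l H0 hH0inf hH0 A hA hnot F hF hTriv
end

section
/- Let S be a 2-syndetic subset of ℕ. Then either the set of pairs (x, r) ∈ ℕ × ℕ with r ≥ 2, x ∈ S and x·r² ∈ S is infinite, or the set of odd m ∈ ℕ with m² ∈ S is infinite (i.e., S contains infinitely many odd perfect squares). -/
/-- a 2-syndetic set contains infinitely many configurations
`{x, x·r²}` or infinitely many odd perfect squares. -/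
theorem two_syndetic_squares_or_odd_squares (S : Set ℕ)
    (hS : SyndeticWith S 2) :
    {p : ℕ × ℕ | 2 ≤ p.2 ∧ p.1 ∈ S ∧ p.1 * p.2 ^ 2 ∈ S}.Infinite ∨
    {m : ℕ | Odd m ∧ m ^ 2 ∈ S}.Infinite := by
  by_cases h : {m : ℕ | Odd m ∧ m ^ 2 ∈ S}.Infinite
  · exact Or.inr h
  left
  rw [Set.not_infinite] at h
  obtain ⟨N, hN⟩ := h.bddAbove
  have key : ∀ m : ℕ, Odd m → N < m → m ^ 2 + 1 ∈ S := by
    intro m hm hNm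
    have hmpos : 0 < m := lt_of_le_of_lt (Nat.zero_le N) hNm
    obtain ⟨p, hpS, hp1, hp2⟩ := hS (m ^ 2) (by positivity)
    have : p = m ^ 2 ∨ p = m ^ 2 + 1 := by omega
    rcases this with rfl | rfl
    · exact absurd (hN ⟨hm, hpS⟩) (not_le.mpr hNm)
    · exact hpS
  apply Set.infinite_of_injective_forall_mem
    (f := fun k : ℕ => ((2 * N + 1 + 2 * k) ^ 2 + 1, 4 * (2 * N + 1 + 2 * k) ^ 2 + 1))
  · intro a b hab
    simp only [Prod.mk.injEq] at hab
    have h2 : (2 * N + 1 + 2 * a) ^ 2 = (2 * N + 1 + 2 * b) ^ 2 := by omega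
    have := Nat.pow_left_injective (two_ne_zero) h2
    omega
  · intro k
    set m := 2 * N + 1 + 2 * k with hm
    have hmodd : Odd m := ⟨N + k, by omega⟩
    have hNm : N < m := by omega
    refine ⟨by simp; nlinarith, key m hmodd hNm, ?_⟩
    have hid : (m ^ 2 + 1) * (4 * m ^ 2 + 1) ^ 2 = (4 * m ^ 3 + 3 * m) ^ 2 + 1 := by ring
    simp only
    rw [hid]
    have hodd2 : Odd (4 * m ^ 3 + 3 * m) := by
      have he : 4 * m ^ 3 + 3 * m = m * (4 * m ^ 2 + 3) := by ring
      rw [he]; exact hmodd.mul ⟨2 * m ^ 2 + 1, by ring⟩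
    exact key _ hodd2 (by nlinarith)
end
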